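/- arXiv:1902.07049 — 9 statements merged into one kernel-verified Lean document; each statement's English description precedes it below -/
import Mathlib

section
/- Let R be a commutative ring and D : R → R a derivation (additive and satisfying D(xy) = x·D(y) + D(x)·y). Let n ≥ 1 and let G be an n×n matrix over R. Define matrices G_s by G_1 = G and G_{s+1} = G_s·G + D(G_s), where D(G_s) means D applied entrywise. Let D also act componentwise on vectors in R^n, and define the operator Δ : R^n → R^n by Δ(v) = D(v) − G·v (matrix-vector product). Then for every s ≥ 1 and every vector P ∈ R^n: G_s·P = ∑_{j=0}^s (−1)^j · binomial(s, j) · D^{s−j}(Δ^j(P)), where D^{s−j} and Δ^j denote iterated application. -/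
open Finset

/-- The Leibniz-type identity of Step 2 of the proof of the large-sense
Chudnovsky theorem, in factorial-cleared form, in any commutative
differential ring: `G_s · P = ∑_{j=0}^s (−1)^j C(s,j) D^{s−j}((D−G)^j P)`. -/
theorem iterated_matrix_apply_eq_sum
    (R : Type*) [CommRing R] (D : R → R)
    (hDadd : ∀ x y, D (x + y) = D x + D y)
    (hDmul : ∀ x y, D (x * y) = x * D y + D x * y)
    (n : ℕ) (hn : 1 ≤ n)
    (G : Matrix (Fin n) (Fin n) R)
    (Gmat : ℕ → Matrix (Fin n) (Fin n) R)
    (hG1 : Gmat 1 = G)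
    (hGrec : ∀ s, 1 ≤ s → Gmat (s + 1) = Gmat s * G + (Gmat s).map D)
    (Dvec : (Fin n → R) → (Fin n → R))
    (hDvec : ∀ v i, Dvec v i = D (v i))
    (Δ : (Fin n → R) → (Fin n → R))
    (hΔ : ∀ v, Δ v = Dvec v - G.mulVec v) :
    ∀ s, 1 ≤ s → ∀ P : Fin n → R,
      (Gmat s).mulVec P
        = ∑ j ∈ Finset.range (s + 1),
            ((-1 : R) ^ j * (s.choose j : R)) • (Dvec^[s - j] (Δ^[j] P)) := by
  -- D as an additive monoid hom
  set Dhom : R →+ R := AddMonoidHom.mk' D hDadd with hDhom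
  have hDeq : ∀ x, D x = Dhom x := fun x => rfl
  have hD0 : D 0 = 0 := by rw [hDeq]; exact map_zero Dhom
  have hD1 : D 1 = 0 := by
    have h := hDmul 1 1
    simp only [mul_one, one_mul] at h
    exact add_eq_left.mp h.symm
  have hDneg : ∀ x, D (-x) = - D x := by
    intro x; rw [hDeq, hDeq]; exact map_neg Dhom x
  have hDnat : ∀ m : ℕ, D (m : R) = 0 := by
    intro m
    induction m with
    | zero => simpa using hD0
    | succ m ih => push_cast; rw [hDadd]; rw [ih, hD1]; ring
  have hDpow : ∀ j : ℕ, D ((-1 : R) ^ j) = 0 := by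
    intro j
    induction j with
    | zero => simpa using hD1
    | succ j ih =>
      rw [pow_succ, hDmul, ih, hDneg, hD1]; ring
  -- the coefficients are D-constants
  have hDc : ∀ (a b : ℕ), D ((-1 : R) ^ a * (b : R)) = 0 := by
    intro a b
    rw [hDmul, hDpow, hDnat]; ring
  -- Dvec basic facts
  have hDvadd : ∀ v w, Dvec (v + w) = Dvec v + Dvec w := by
    intro v w; funext i
    simp [hDvec, hDadd]
  have hDvneg : ∀ v, Dvec (-v) = - Dvec v := by
    intro v; funext i; simp [hDvec, hDneg]
  have hDvsub : ∀ v w, Dvec (v - w) = Dvec v - Dvec w := by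
    intro v w
    rw [sub_eq_add_neg, hDvadd, hDvneg, sub_eq_add_neg]
  have hDvsmul : ∀ (c : R), D c = 0 → ∀ v, Dvec (c • v) = c • Dvec v := by
    intro c hc v; funext i
    simp only [hDvec, Pi.smul_apply, smul_eq_mul, hDmul, hc]
    ring
  have hDvsum : ∀ (m : ℕ) (f : ℕ → Fin n → R),
      Dvec (∑ j ∈ Finset.range m, f j) = ∑ j ∈ Finset.range m, Dvec (f j) := by
    intro m f; funext i
    simp only [hDvec, Finset.sum_apply, hDeq]
    exact map_sum Dhom _ _
  -- Leibniz rule for mulVec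
  have hmapD : ∀ (M : Matrix (Fin n) (Fin n) R) (v : Fin n → R),
      (M.map D).mulVec v = Dvec (M.mulVec v) - M.mulVec (Dvec v) := by
    intro M v; funext i
    simp only [Matrix.mulVec, dotProduct, Matrix.map_apply, hDvec,
      Pi.sub_apply, hDeq, map_sum]
    rw [← Finset.sum_sub_distrib]
    apply Finset.sum_congr rfl
    intro k _
    rw [← hDeq, ← hDeq, ← hDeq, hDmul]
    ring
  intro s hs
  induction s, hs using Nat.le_induction with
  | base =>
    intro P
    rw [hG1, Finset.sum_range_succ, Finset.sum_range_one]
    simp only [Function.iterate_one, Function.iterate_zero, id_eq, pow_zero, pow_one,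
      Nat.choose_self, Nat.choose_zero_right, Nat.cast_one, one_mul, mul_one, one_smul,
      Nat.sub_self, neg_one_smul]
    rw [hΔ]
    have h10 : (1 : ℕ) - 0 = 1 := rfl
    rw [h10, Function.iterate_one]
    abel
  | succ s hs ih =>
    intro P
    -- key recurrence
    have hkey : (Gmat (s+1)).mulVec P
        = Dvec ((Gmat s).mulVec P) - (Gmat s).mulVec (Δ P) := by
      rw [hGrec s hs, Matrix.add_mulVec, ← Matrix.mulVec_mulVec, hmapD, hΔ,
        Matrix.mulVec_sub]
      abel
    rw [hkey, ih P, ih (Δ P)]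
    have h1 : Dvec (∑ j ∈ Finset.range (s + 1),
        ((-1 : R) ^ j * (s.choose j : R)) • (Dvec^[s - j] (Δ^[j] P)))
        = ∑ j ∈ Finset.range (s + 1),
            ((-1 : R) ^ j * (s.choose j : R)) • (Dvec^[s + 1 - j] (Δ^[j] P)) := by
      rw [hDvsum]
      apply Finset.sum_congr rfl
      intro j hj
      rw [Finset.mem_range, Nat.lt_succ_iff] at hj
      rw [hDvsmul _ (hDc j _)]
      congr 1
      have h : s + 1 - j = (s - j) + 1 := by omega
      rw [h, Function.iterate_succ_apply']
    have h2' : (∑ j ∈ Finset.range (s + 1),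
        ((-1 : R) ^ j * (s.choose j : R)) • (Dvec^[s - j] (Δ^[j] (Δ P))))
        = ∑ j ∈ Finset.range (s + 1),
            ((-1 : R) ^ j * (s.choose j : R)) • (Dvec^[s + 1 - (j + 1)] (Δ^[j + 1] P)) := by
      apply Finset.sum_congr rfl
      intro j _
      congr 1
      have h : s + 1 - (j + 1) = s - j := by omega
      rw [h, ← Function.iterate_succ_apply]
    rw [h1, h2',
      Finset.sum_range_succ'
        (fun j => ((-1 : R) ^ j * ((s+1).choose j : R)) • Dvec^[s + 1 - j] (Δ^[j] P)) (s+1),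
      Finset.sum_range_succ'
        (fun j => ((-1 : R) ^ j * (s.choose j : R)) • Dvec^[s + 1 - j] (Δ^[j] P)) s]
    have hvan : (∑ j ∈ Finset.range s,
          ((-1:R) ^ (j+1) * (s.choose (j+1) : R)) • Dvec^[s + 1 - (j+1)] (Δ^[j+1] P))
        = ∑ j ∈ Finset.range (s+1),
          ((-1:R) ^ (j+1) * (s.choose (j+1) : R)) • Dvec^[s + 1 - (j+1)] (Δ^[j+1] P) := by
      rw [Finset.sum_range_succ]
      simp [Nat.choose_succ_self]
    rw [hvan, add_sub_right_comm, ← Finset.sum_sub_distrib]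
    congr 1
    · apply Finset.sum_congr rfl
      intro j _
      rw [← sub_smul]
      congr 1
      push_cast [Nat.choose_succ_succ]
      ring
    · norm_num
end

section
/- Let K be a field of characteristic zero and n ≥ 1. Let T ∈ K[z], let A be an n×n matrix over K[z], and let f_1, …, f_n ∈ K⟦z⟧ be formal power series such that T·f_i' = ∑_j A_{ij}·f_j for all i (formal derivative, polynomials regarded as power series). Let Q ∈ K[z], let P_1, …, P_n ∈ K[z], and let N, M be natural numbers such that for every i, z^{N+M} divides Q·f_i − P_i in K⟦z⟧. Define vectors of polynomials R_m = (R_{m,1},…,R_{m,n}) by R_{0,i} = P_i and R_{m+1,i} = T·(R_{m,i})' − ∑_j A_{ij}·R_{m,j} − m·T'·R_{m,i}. Then for every m ≤ N+M and every i, z^{N+M−m} divides T^m·Q^{(m)}·f_i − R_{m,i} in K⟦z⟧, where Q^{(m)} is the m-th derivative of Q. -/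
/-!
The error vector `E_m := T^m Q^{(m)} f − R_m` satisfies `E_{m+1} = T E_m' − A E_m − m T' E_m`:
the terms in `f` combine because `T f' = A f` and
`T^{m+1} Q^{(m+1)} = T (T^m Q^{(m)})' − m T' T^m Q^{(m)}`.
Of the three terms on the right only the derivative can lower the `X`-adic order, and by one only.
-/

open Polynomial PowerSeries Finset

noncomputable section

theorem PowerSeries.X_pow_dvd_derivative {R : Type*} [CommSemiring R] {k : ℕ} {g : R⟦X⟧}
    (h : (PowerSeries.X : R⟦X⟧) ^ (k + 1) ∣ g) : (PowerSeries.X : R⟦X⟧) ^ k ∣ d⁄dX R g := by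
  rw [X_pow_dvd_iff] at h ⊢
  intro m hm
  rw [coeff_derivative, h (m + 1) (by omega), zero_mul]

theorem Polynomial.pow_succ_mul_iterate_derivative_succ {R : Type*} [CommRing R]
    (T Q : R[X]) (m : ℕ) :
    T ^ (m + 1) * derivative^[m + 1] Q
      = T * derivative (T ^ m * derivative^[m] Q)
        - m * derivative T * (T ^ m * derivative^[m] Q) := by
  rw [Function.iterate_succ_apply', derivative_mul, derivative_pow, C_eq_natCast]
  cases m with
  | zero => simp
  | succ k => rw [Nat.add_sub_cancel]; ring

section TwistedDerivative

variable {R ι : Type*} [CommRing R] [Fintype ι]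

/-- The operator `T·(D − G) − c·T'` with `G = A/T`, acting on vectors of power series;
the recursion for `R_m` is this operator with `c = m`. -/
def twistedDerivative (T : R⟦X⟧) (A : Matrix ι ι R⟦X⟧) (c : R⟦X⟧) (S : ι → R⟦X⟧) :
    ι → R⟦X⟧ :=
  fun i => T * d⁄dX R (S i) - ∑ j, A i j * S j - c * d⁄dX R T * S i

theorem X_pow_dvd_twistedDerivative {T : R⟦X⟧} {A : Matrix ι ι R⟦X⟧} {c : R⟦X⟧}
    {S : ι → R⟦X⟧} {k : ℕ} (hS : ∀ j, (PowerSeries.X : R⟦X⟧) ^ (k + 1) ∣ S j) (i : ι) :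
    (PowerSeries.X : R⟦X⟧) ^ k ∣ twistedDerivative T A c S i := by
  have hS' : ∀ j, (PowerSeries.X : R⟦X⟧) ^ k ∣ S j :=
    fun j => (pow_dvd_pow _ k.le_succ).trans (hS j)
  refine dvd_sub (dvd_sub ?_ ?_) ?_
  · exact (X_pow_dvd_derivative (hS i)).mul_left _
  · exact dvd_sum fun j _ => (hS' j).mul_left _
  · exact (hS' i).mul_left _

theorem twistedDerivative_mul_sub {T : R⟦X⟧} {A : Matrix ι ι R⟦X⟧} {f : ι → R⟦X⟧}
    (hf : ∀ i, T * d⁄dX R (f i) = ∑ j, A i j * f j) (c q : R⟦X⟧) (r : ι → R⟦X⟧) (i : ι) :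
    twistedDerivative T A c (fun j => q * f j - r j) i
      = (T * d⁄dX R q - c * d⁄dX R T * q) * f i - twistedDerivative T A c r i := by
  have hsum : ∑ j, A i j * (q * f j - r j) = q * ∑ j, A i j * f j - ∑ j, A i j * r j := by
    rw [mul_sum, ← sum_sub_distrib]
    exact sum_congr rfl fun j _ => by ring
  simp only [twistedDerivative, hsum, map_sub, Derivation.leibniz, smul_eq_mul]
  linear_combination q * hf i

theorem Polynomial.coe_twistedDerivative (T c : R[X]) (A : Matrix ι ι R[X]) (p : ι → R[X])
    (i : ι) :
    ((T * derivative (p i) - ∑ j, A i j * p j - c * (derivative T * p i) : R[X]) : R⟦X⟧)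
      = twistedDerivative (T : R⟦X⟧) (A.map (↑)) c (fun j => (p j : R⟦X⟧)) i := by
  have hsum : ((∑ j, A i j * p j : R[X]) : R⟦X⟧) = ∑ j, (A i j : R⟦X⟧) * p j := by
    rw [← coeToPowerSeries.ringHom_apply, map_sum]
    simp [coeToPowerSeries.ringHom_apply]
  simp [twistedDerivative, hsum, derivative_coe, mul_assoc]

end TwistedDerivative

theorem pade_iterated_congruence_general
    (K : Type*) [Field K]
    (n : ℕ)
    (T : Polynomial K) (A : Matrix (Fin n) (Fin n) (Polynomial K))
    (f : Fin n → PowerSeries K)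
    (hsys : ∀ i, (T : PowerSeries K) * PowerSeries.derivativeFun (f i)
        = ∑ j, (A i j : PowerSeries K) * f j)
    (Q : Polynomial K) (P : Fin n → Polynomial K) (N M : ℕ)
    (hpade : ∀ i, (PowerSeries.X : PowerSeries K) ^ (N + M)
        ∣ (Q : PowerSeries K) * f i - (P i : PowerSeries K))
    (R : ℕ → Fin n → Polynomial K)
    (hR0 : ∀ i, R 0 i = P i)
    (hRrec : ∀ m i, R (m + 1) i
        = T * Polynomial.derivative (R m i) - (∑ j, A i j * R m j)
          - (m : Polynomial K) * (Polynomial.derivative T * R m i)) :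
    ∀ m ≤ N + M, ∀ i, (PowerSeries.X : PowerSeries K) ^ (N + M - m)
      ∣ ((T ^ m * Polynomial.derivative^[m] Q : Polynomial K) : PowerSeries K) * f i
        - (R m i : PowerSeries K) := by
  have hf : ∀ i, (T : K⟦X⟧) * d⁄dX K (f i) = ∑ j, A.map (↑) i j * f j :=
    fun i => by simp only [Matrix.map_apply]; exact hsys i
  have herror_succ : ∀ m i,
      ((T ^ (m + 1) * derivative^[m + 1] Q : K[X]) : K⟦X⟧) * f i - (R (m + 1) i : K⟦X⟧)
        = twistedDerivative (T : K⟦X⟧) (A.map (↑)) (m : K[X])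
            (fun j => ((T ^ m * derivative^[m] Q : K[X]) : K⟦X⟧) * f j - (R m j : K⟦X⟧)) i := by
    intro m i
    rw [twistedDerivative_mul_sub hf, hRrec, coe_twistedDerivative,
      pow_succ_mul_iterate_derivative_succ]
    generalize T ^ m * derivative^[m] Q = q
    simp only [Polynomial.coe_sub, Polynomial.coe_mul, derivative_coe]
  intro m hm
  induction m with
  | zero => simpa [hR0] using hpade
  | succ m ih =>
    intro i
    rw [herror_succ]
    refine X_pow_dvd_twistedDerivative (fun j => ?_) i
    rw [show N + M - (m + 1) + 1 = N + M - m by omega]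
    exact ih (by omega) j

/-- Step 1 of the proof of the large-sense Chudnovsky theorem: differentiating a
Padé-type approximation `Q·f − P = O(z^{N+M})` of a solution of the system
`T·y' = A·y` loses one order of vanishing per derivative:
`z^{N+M−m} ∣ T^m Q^{(m)} f_i − R_{m,i}` where `R_m = T^m (D−G)^m P`. -/
theorem pade_iterated_congruence
    (K : Type*) [Field K] [CharZero K]
    (n : ℕ) (hn : 1 ≤ n)
    (T : Polynomial K) (A : Matrix (Fin n) (Fin n) (Polynomial K))
    (f : Fin n → PowerSeries K)
    (hsys : ∀ i, (T : PowerSeries K) * PowerSeries.derivativeFun (f i)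
        = ∑ j, (A i j : PowerSeries K) * f j)
    (Q : Polynomial K) (P : Fin n → Polynomial K) (N M : ℕ)
    (hpade : ∀ i, (PowerSeries.X : PowerSeries K) ^ (N + M)
        ∣ (Q : PowerSeries K) * f i - (P i : PowerSeries K))
    (R : ℕ → Fin n → Polynomial K)
    (hR0 : ∀ i, R 0 i = P i)
    (hRrec : ∀ m i, R (m + 1) i
        = T * Polynomial.derivative (R m i) - (∑ j, A i j * R m j)
          - (m : Polynomial K) * (Polynomial.derivative T * R m i)) :
    ∀ m ≤ N + M, ∀ i, (PowerSeries.X : PowerSeries K) ^ (N + M - m)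
      ∣ ((T ^ m * Polynomial.derivative^[m] Q : Polynomial K) : PowerSeries K) * f i
        - (R m i : PowerSeries K) :=
  pade_iterated_congruence_general K n T A f hsys Q P N M hpade R hR0 hRrec
end
end

section
/- Let K be a field and n ≥ 1. Let T ∈ K[z], let A be an n×n matrix over K[z], and let t be a natural number such that natDegree(T) ≤ t and natDegree(A_{ij}) ≤ t for all i, j. Let P_1, …, P_n ∈ K[z] with natDegree(P_i) ≤ N for all i. Define R_{0,i} = P_i and R_{m+1,i} = T·(R_{m,i})' − ∑_j A_{ij}·R_{m,j} − m·T'·R_{m,i}. Then for every m and every i, natDegree(R_{m,i}) ≤ N + t·m. -/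
open Polynomial Finset

/-- Degree bound (Step 4 of the proof of the large-sense Chudnovsky theorem):
the polynomial vectors `R_m = T^m (D−G)^m P` satisfy `deg R_{m,i} ≤ N + t·m`. -/
theorem natDegree_R_le
    (K : Type*) [Field K]
    (n : ℕ) (hn : 1 ≤ n)
    (T : Polynomial K) (A : Matrix (Fin n) (Fin n) (Polynomial K))
    (t : ℕ) (hT : T.natDegree ≤ t) (hA : ∀ i j, (A i j).natDegree ≤ t)
    (P : Fin n → Polynomial K) (N : ℕ) (hP : ∀ i, (P i).natDegree ≤ N)
    (R : ℕ → Fin n → Polynomial K)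
    (hR0 : ∀ i, R 0 i = P i)
    (hRrec : ∀ m i, R (m + 1) i
        = T * Polynomial.derivative (R m i) - (∑ j, A i j * R m j)
          - (m : Polynomial K) * (Polynomial.derivative T * R m i)) :
    ∀ m i, (R m i).natDegree ≤ N + t * m := by
  intro m
  induction m with
  | zero =>
    intro i
    simpa [hR0 i] using hP i
  | succ m ih =>
    intro i
    rw [hRrec m i]
    have key : N + t * (m + 1) = N + t * m + t := by ring
    rw [key]
    refine le_trans (natDegree_sub_le _ _) (max_le (le_trans (natDegree_sub_le _ _)
      (max_le ?_ ?_)) ?_)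
    · refine le_trans (natDegree_mul_le) ?_
      have := (Polynomial.natDegree_derivative_le (R m i)).trans
        ((Nat.sub_le _ _).trans (ih i))
      omega
    · refine le_trans (natDegree_sum_le _ _) ?_
      apply Finset.sup_le
      intro j _
      refine le_trans natDegree_mul_le ?_
      have := hA i j
      have := ih j
      omega
    · refine le_trans natDegree_mul_le ?_
      have h1 : ((m : Polynomial K)).natDegree = 0 := natDegree_natCast m
      refine le_trans (by omega : _ ≤ 0 + (derivative T * R m i).natDegree) ?_
      refine le_trans (by simpa using natDegree_mul_le (p := derivative T) (q := R m i)) ?_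
      have := (Polynomial.natDegree_derivative_le T).trans ((Nat.sub_le _ _).trans hT)
      have := ih i
      omega
end

section
/- Let K be a number field. Let U, V, W ∈ K[X] be polynomials such that U = V·W and such that every coefficient of U and every coefficient of V is integral over ℤ. Let v₀ = coefficient of X^0 in V. Then for every j, the element N_{K/ℚ}(v₀)·(coefficient of X^j in W) of K is integral over ℤ, where N_{K/ℚ} : K → ℚ denotes the field norm (Algebra.norm ℚ). -/
/-!
Kronecker–Dedekind: at every finite place `v` of `K` the Gauss norm `‖·‖_v` of polynomials is
multiplicative, so `|vᵢ wⱼ|_v ≤ ‖V‖_v ‖W‖_v = ‖U‖_v ≤ 1`, and `v₀ w_j` is an algebraic integer.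
Moreover `N(v₀) / v₀` is the product of the conjugates of `v₀` other than `v₀` itself, hence an
algebraic integer, and `N(v₀) w_j = (N(v₀) / v₀) (v₀ w_j)`.
-/

open scoped Polynomial

namespace Polynomial

variable {R : Type*} [Ring R] {v : AbsoluteValue R ℝ}

theorem gaussNorm_le_of_forall_le {p : R[X]} {c C : ℝ}
    (h : ∀ i, v (p.coeff i) * c ^ i ≤ C) : p.gaussNorm v c ≤ C := by
  obtain ⟨i, hi⟩ := p.exists_eq_gaussNorm v c
  exact hi ▸ h i

theorem abv_coeff_mul_coeff_le_gaussNorm_mul (hna : IsNonarchimedean v) (p q : R[X]) (i j : ℕ) :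
    v (p.coeff i * q.coeff j) ≤ (p * q).gaussNorm v 1 := by
  have hp := p.le_gaussNorm v zero_le_one i
  have hq := q.le_gaussNorm v zero_le_one j
  rw [one_pow, mul_one] at hp hq
  rw [gaussNorm_mul hna one_pos, map_mul]
  exact mul_le_mul hp hq (v.nonneg _) (p.gaussNorm_nonneg v zero_le_one)

theorem abv_coeff_mul_coeff_le_one (hna : IsNonarchimedean v) {p q : R[X]}
    (h : ∀ k, v ((p * q).coeff k) ≤ 1) (i j : ℕ) : v (p.coeff i * q.coeff j) ≤ 1 :=
  (abv_coeff_mul_coeff_le_gaussNorm_mul hna p q i j).trans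
    (gaussNorm_le_of_forall_le fun k ↦ by simpa using h k)

end Polynomial

namespace IsDedekindDomain

variable {R K : Type*} [CommRing R] [IsDedekindDomain R] [Field K] [Algebra R K]
  [IsFractionRing R K]

theorem HeightOneSpectrum.adicAbv_le_one_iff (v : HeightOneSpectrum R) {b : NNReal} (hb : 1 < b)
    (x : K) : v.adicAbv hb x ≤ 1 ↔ v.valuation K x ≤ 1 := by
  simp [HeightOneSpectrum.adicAbv, HeightOneSpectrum.adicAbvDef,
    WithZeroMulInt.toNNReal_le_one_iff hb]

theorem isIntegral_iff_forall_adicAbv_le_one {b : NNReal} (hb : 1 < b) {x : K} :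
    IsIntegral R x ↔ ∀ v : HeightOneSpectrum R, v.adicAbv hb x ≤ 1 := by
  rw [IsIntegrallyClosed.isIntegral_iff]
  refine ⟨?_, fun h ↦ ?_⟩
  · rintro ⟨r, rfl⟩ v
    exact v.adicAbv_coe_le_one hb r
  · exact HeightOneSpectrum.mem_integers_of_valuation_le_one K x
      fun v ↦ (v.adicAbv_le_one_iff hb x).mp (h v)

theorem isIntegral_coeff_mul_coeff {p q : K[X]} (h : ∀ k, IsIntegral R ((p * q).coeff k))
    (i j : ℕ) : IsIntegral R (p.coeff i * q.coeff j) := by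
  simp only [isIntegral_iff_forall_adicAbv_le_one one_lt_two] at h ⊢
  exact fun v ↦ Polynomial.abv_coeff_mul_coeff_le_one (v.isNonarchimedean_adicAbv one_lt_two)
    (fun k ↦ h k v) i j

end IsDedekindDomain

theorem IsIntegral.exists_isIntegral_mul_eq_algebraMap_norm {R K L : Type*} [CommRing R] [Field K]
    [Field L] [Algebra R K] [Algebra K L] [Algebra R L] [IsScalarTower R K L]
    [FiniteDimensional K L] [Algebra.IsSeparable K L] {x : L} (hx : IsIntegral R x) :
    ∃ y : L, IsIntegral R y ∧ y * x = algebraMap K L (Algebra.norm K x) := by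
  classical
  obtain rfl | hx0 := eq_or_ne x 0
  · exact ⟨0, isIntegral_zero, by simp⟩
  let E := AlgebraicClosure L
  refine ⟨algebraMap K L (Algebra.norm K x) * x⁻¹, ?_, inv_mul_cancel_right₀ hx0 _⟩
  have hprod : algebraMap L E (algebraMap K L (Algebra.norm K x) * x⁻¹) =
      ∏ σ ∈ Finset.univ.erase (IsScalarTower.toAlgHom K L E), σ x := by
    have hι : algebraMap L E x = IsScalarTower.toAlgHom K L E x := rfl
    have hx0' : algebraMap L E x ≠ 0 := (_root_.map_ne_zero _).mpr hx0
    rw [map_mul, map_inv₀, ← IsScalarTower.algebraMap_apply, Algebra.norm_eq_prod_embeddings K E,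
      ← Finset.mul_prod_erase _ _ (Finset.mem_univ _), ← hι, mul_comm, inv_mul_cancel_left₀ hx0']
  rw [← isIntegral_algebraMap_iff (algebraMap L E).injective, hprod]
  exact IsIntegral.prod _ fun σ _ ↦ hx.map (σ.restrictScalars R)

open NumberField in
theorem NumberField.isIntegral_int_iff_isIntegral_ringOfIntegers {K : Type*} [Field K]
    [NumberField K] {x : K} : IsIntegral ℤ x ↔ IsIntegral (𝓞 K) x :=
  ⟨IsIntegral.tower_top, isIntegral_trans x⟩

/-- Lemme 9: if `U = V·W` with `U, V` having algebraic-integer coefficients,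
then the norm of the constant coefficient of `V` clears the denominators of `W`. -/
theorem norm_constantCoeff_mul_coeff_isIntegral
    (K : Type*) [Field K] [NumberField K]
    (U V W : Polynomial K) (hUVW : U = V * W)
    (hU : ∀ k, IsIntegral ℤ (U.coeff k))
    (hV : ∀ k, IsIntegral ℤ (V.coeff k)) :
    ∀ j, IsIntegral ℤ (algebraMap ℚ K (Algebra.norm ℚ (V.coeff 0)) * W.coeff j) := by
  intro j
  subst hUVW
  obtain ⟨y, hy, hyv⟩ := (hV 0).exists_isIntegral_mul_eq_algebraMap_norm (K := ℚ)
  have hvw : IsIntegral ℤ (V.coeff 0 * W.coeff j) := by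
    simp only [NumberField.isIntegral_int_iff_isIntegral_ringOfIntegers] at hU ⊢
    exact IsDedekindDomain.isIntegral_coeff_mul_coeff hU 0 j
  rw [← hyv, mul_assoc]
  exact hy.mul hvw
end

section
/- Let n ≥ 1 and let b : Fin n → ℂ be a nonzero vector. Let B be the n×n complex matrix defined by: B_{i,0} = b_i for every i, B_{i,i+1} = 1 for every i ≤ n−2, and all other entries zero. Let e ∈ ℂ^n be the standard basis vector with 1 in the last coordinate (index n−1) and 0 elsewhere. Then for every natural number m, B^m·e ≠ 0. -/
/-!
`B` acts on the standard basis as a shift `eⱼ₊₁ ↦ eⱼ` followed by `e₀ ↦ b`, so starting from the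
last basis vector its iterates run through all basis vectors and reach `Bⁿ e = b ≠ 0`. If some
`Bᵐ e` vanished, `e` would lie in the kernel of `Bᵐ`; but the kernels of the powers of an
endomorphism of an `n`-dimensional space stabilise by the `n`-th power, so `Bⁿ e = 0`.
-/

open Matrix

theorem Matrix.pow_card_mulVec_eq_zero_of_pow_mulVec_eq_zero {K ι : Type*} [Field K] [Fintype ι]
    [DecidableEq ι] (A : Matrix ι ι K) {v : ι → K} {m : ℕ} (h : A ^ m *ᵥ v = 0) :
    A ^ Fintype.card ι *ᵥ v = 0 := by
  have hker := Module.End.ker_pow_le_ker_pow_finrank (toLin' A) m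
  rw [← toLin'_pow, ← toLin'_pow, Module.finrank_fintype_fun_eq_card] at hker
  have hv : v ∈ LinearMap.ker (toLin' (A ^ m)) := by rwa [LinearMap.mem_ker, toLin'_apply]
  simpa only [LinearMap.mem_ker, toLin'_apply] using hker hv

section ShiftMatrix

variable {R : Type*} [Semiring R] {n : ℕ} {B : Matrix (Fin n) (Fin n) R}

theorem mulVec_single_succ_of_superdiag
    (hsup : ∀ i j : Fin n, (j : ℕ) = (i : ℕ) + 1 → B i j = 1)
    (hzero : ∀ i j : Fin n, (j : ℕ) ≠ 0 → (j : ℕ) ≠ (i : ℕ) + 1 → B i j = 0)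
    (j : ℕ) (hj : j + 1 < n) :
    B *ᵥ Pi.single ⟨j + 1, hj⟩ 1 = Pi.single ⟨j, by omega⟩ 1 := by
  ext i
  rw [mulVec_single_one, col_apply, Pi.single_apply]
  by_cases hij : (i : ℕ) = j
  · rw [if_pos (Fin.ext hij), hsup i _ (by simp [hij])]
  · rw [if_neg (fun h => hij (congrArg Fin.val h)), hzero i _ (by simp) (by simpa using Ne.symm hij)]

theorem pow_mulVec_single_add_of_superdiag
    (hsup : ∀ i j : Fin n, (j : ℕ) = (i : ℕ) + 1 → B i j = 1)
    (hzero : ∀ i j : Fin n, (j : ℕ) ≠ 0 → (j : ℕ) ≠ (i : ℕ) + 1 → B i j = 0)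
    (j k : ℕ) (hjk : j + k < n) :
    B ^ k *ᵥ Pi.single ⟨j + k, hjk⟩ 1 = Pi.single ⟨j, by omega⟩ 1 := by
  induction k with
  | zero => rw [pow_zero, one_mulVec]; rfl
  | succ k ih =>
    rw [pow_succ, ← mulVec_mulVec]
    change B ^ k *ᵥ B *ᵥ Pi.single ⟨j + k + 1, hjk⟩ 1 = _
    rw [mulVec_single_succ_of_superdiag hsup hzero, ih]

end ShiftMatrix

/-- Step 1 of the regular-singularity proof: for the matrix `B` with first
column `b ≠ 0` and superdiagonal `1`, no iterate `B^m` kills the last basis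
vector `e`. -/
theorem pow_mulVec_lastBasis_ne_zero
    (n : ℕ) (hn : 1 ≤ n) (b : Fin n → ℂ) (hb : b ≠ 0)
    (B : Matrix (Fin n) (Fin n) ℂ)
    (hcol : ∀ i : Fin n, ∀ j : Fin n, (j : ℕ) = 0 → B i j = b i)
    (hsup : ∀ i j : Fin n, (j : ℕ) = (i : ℕ) + 1 → B i j = 1)
    (hzero : ∀ i j : Fin n, (j : ℕ) ≠ 0 → (j : ℕ) ≠ (i : ℕ) + 1 → B i j = 0)
    (e : Fin n → ℂ) (he : ∀ i : Fin n, e i = if (i : ℕ) = n - 1 then 1 else 0) :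
    ∀ m : ℕ, (B ^ m).mulVec e ≠ 0 := by
  have he_single : e = Pi.single ⟨0 + (n - 1), by omega⟩ 1 := by
    ext i
    simp [he, Pi.single_apply, Fin.ext_iff]
  have hBn : B ^ n *ᵥ e = b := by
    have hpow : B ^ n = B * B ^ (n - 1) := by rw [← pow_succ']; congr 1; omega
    rw [hpow, ← mulVec_mulVec, he_single,
      pow_mulVec_single_add_of_superdiag hsup hzero, mulVec_single_one]
    ext i
    exact hcol i _ rfl
  intro m hm
  apply hb
  rw [← hBn]
  simpa only [Fintype.card_fin] using B.pow_card_mulVec_eq_zero_of_pow_mulVec_eq_zero hm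
end

section
/- Let c : ℕ → ℕ → ℕ be a doubly-indexed sequence satisfying c(1,1) = 1 and, for every s ≥ 1: c(s+1, 1) = (s+1)·c(s, 1); c(s+1, k) = c(s, k−1) + (s+k)·c(s, k) for every k with 2 ≤ k ≤ s; and c(s+1, s+1) = c(s, s). Then for every s ≥ 1 and every ℓ with 1 ≤ ℓ ≤ s, one has ℓ!·c(s, ℓ) = binomial(s−1, s−ℓ)·s!. -/
/-- Closed form (équation (24)) for the coefficients appearing in the `s`-th
derivative of `u ↦ y(1/u)`: `c(s,ℓ) = C(s−1, s−ℓ) · s!/ℓ!`. -/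
theorem inversion_coefficients_closed_form
    (c : ℕ → ℕ → ℕ)
    (hc11 : c 1 1 = 1)
    (hrec1 : ∀ s, 1 ≤ s → c (s + 1) 1 = (s + 1) * c s 1)
    (hrecmid : ∀ s, 1 ≤ s → ∀ k, 2 ≤ k → k ≤ s → c (s + 1) k = c s (k - 1) + (s + k) * c s k)
    (hreclast : ∀ s, 1 ≤ s → c (s + 1) (s + 1) = c s s) :
    ∀ s, 1 ≤ s → ∀ ℓ, 1 ≤ ℓ → ℓ ≤ s →
      ℓ.factorial * c s ℓ = (s - 1).choose (s - ℓ) * s.factorial := by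
  intro s hs
  induction s, hs using Nat.le_induction with
  | base =>
    intro ℓ h1 h2
    interval_cases ℓ
    simpa using hc11
  | succ s hs ih =>
    intro ℓ h1 hℓ
    rcases eq_or_lt_of_le h1 with h | h2
    · -- ℓ = 1
      subst h
      rw [hrec1 s hs]
      have h := ih 1 le_rfl hs
      simp [Nat.choose_self] at h
      simp [Nat.choose_self, Nat.factorial_succ, h]
    · rcases eq_or_lt_of_le hℓ with h | hlt
      · -- ℓ = s + 1
        subst h
        rw [hreclast s hs]
        have h := ih s hs le_rfl
        simp [Nat.choose_self, Nat.sub_self] at h ⊢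
        have hcs : c s s = 1 := by
          have := Nat.factorial_pos s
          exact Nat.eq_of_mul_eq_mul_left this (by omega)
        simp [hcs]
      · -- 2 ≤ ℓ ≤ s
        have h2 : 2 ≤ ℓ := h2
        have hle : ℓ ≤ s := by omega
        rw [hrecmid s hs ℓ h2 hle]
        obtain ⟨m, rfl⟩ : ∃ m, ℓ = m + 1 := ⟨ℓ - 1, by omega⟩
        obtain ⟨q, rfl⟩ : ∃ q, s = m + q + 1 := ⟨s - m - 1, by omega⟩
        have ihm := ih m (by omega) (by omega)
        have ihm1 := ih (m + 1) (by omega) (by omega)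
        have e1 : m + q + 1 - 1 = m + q := by omega
        have e2 : m + q + 1 - m = q + 1 := by omega
        have e3 : m + q + 1 - (m + 1) = q := by omega
        have e4 : m + q + 1 + 1 - 1 = m + q + 1 := by omega
        have e5 : m + q + 1 + 1 - (m + 1) = q + 1 := by omega
        have e6 : m + 1 - 1 = m := by omega
        rw [e1, e2] at ihm
        rw [e1, e3] at ihm1
        rw [e4, e5, e6]
        set A := (m + q).choose (q + 1) with hA
        set B := (m + q).choose q with hB
        set F := (m + q + 1).factorial with hF
        have pascal : (m + q + 1).choose (q + 1) = B + A :=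
          Nat.choose_succ_succ (m + q) q
        have hrel : A * (q + 1) = B * m := by
          have := Nat.choose_succ_right_eq (m + q) q
          simpa using this
        have key : (m + 1) * A + (2 * m + q + 2) * B = (m + q + 2) * (B + A) := by
          have hrelz : (A : ℤ) * (q + 1) = (B : ℤ) * m := by exact_mod_cast hrel
          have : ((m : ℤ) + 1) * A + (2 * m + q + 2) * B = ((m : ℤ) + q + 2) * (B + A) := by
            linear_combination -hrelz
          exact_mod_cast this
        have hfact : (m + q + 1 + 1).factorial = (m + q + 2) * F := by
          rw [Nat.factorial_succ]
        rw [pascal, hfact]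
        calc (m + 1).factorial * (c (m + q + 1) m + (m + q + 1 + (m + 1)) * c (m + q + 1) (m + 1))
            = (m + 1) * (m.factorial * c (m + q + 1) m)
              + (2 * m + q + 2) * ((m + 1).factorial * c (m + q + 1) (m + 1)) := by
              rw [Nat.factorial_succ]; ring
          _ = (m + 1) * (A * F) + (2 * m + q + 2) * (B * F) := by rw [ihm, ihm1]
          _ = ((m + 1) * A + (2 * m + q + 2) * B) * F := by ring
          _ = ((m + q + 2) * (B + A)) * F := by rw [key]
          _ = (B + A) * ((m + q + 2) * F) := by ring
end

section
/- Let a : ℕ → ℂ and C > 0 be such that |a_n| ≤ C^{n+1} for every n, and define f : ℝ → ℂ by f(t) = ∑'_{n} a_n·t^n/n!. Then for every real number x > C: the function t ↦ exp(−x·t)·f(t) is integrable on [0, ∞), the series ∑_n a_n/x^{n+1} is absolutely convergent, and ∫_0^∞ exp(−x·t)·f(t) dt = ∑'_{n} a_n/x^{n+1}. -/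
open MeasureTheory Set
open scoped Nat ENNReal

/-!
Expanding `f`, the integrand is `∑ₙ aₙ e^{-xt} tⁿ / n!`, and Euler's integral gives
`∫₀^∞ e^{-xt} tⁿ dt = n! / x^{n+1}`. The terms therefore have integrable norms with integrals
`‖aₙ‖ / x^{n+1} ≤ (C/x)^{n+1}`, summable for `x > C`; a series with summable `L¹` norms converges
in `L¹` and almost everywhere to its pointwise sum, so that sum is integrable and can be
integrated term by term.
-/

theorem MeasureTheory.integrable_tsum_of_summable_integral_norm {α E ι : Type*}
    [MeasurableSpace α] {μ : Measure α} [NormedAddCommGroup E] [CompleteSpace E] [Countable ι]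
    {F : ι → α → E} (hF_int : ∀ i, Integrable (F i) μ)
    (hF_sum : Summable fun i ↦ ∫ a, ‖F i a‖ ∂μ) :
    Integrable (fun a ↦ ∑' i, F i a) μ := by
  have h_enorm : ∑' i, ‖(hF_int i).toL1 (F i)‖ₑ ≠ ∞ := by
    simp_rw [Integrable.enorm_toL1, ← ofReal_integral_norm_eq_lintegral_enorm (hF_int _),
      ← ENNReal.ofReal_tsum_of_nonneg (fun i ↦ integral_nonneg fun a ↦ norm_nonneg _) hF_sum]
    exact ENNReal.ofReal_ne_top
  refine (L1.integrable_coeFn (∑' i, (hF_int i).toL1 (F i))).congr ?_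
  filter_upwards [Lp.coeFn_tsum h_enorm, ae_all_iff.2 fun i ↦ (hF_int i).coeFn_toL1]
    with a h_tsum h_toL1
  rw [h_tsum]
  exact tsum_congr h_toL1

theorem integral_exp_neg_mul_mul_pow {x : ℝ} (hx : 0 < x) (n : ℕ) :
    ∫ t in Ioi (0 : ℝ), Real.exp (-(x * t)) * t ^ n = n ! / x ^ (n + 1) := by
  have h := Real.integral_rpow_mul_exp_neg_mul_Ioi (a := n + 1) (by positivity) hx
  rw [Real.Gamma_nat_eq_factorial, add_sub_cancel_right, ← Nat.cast_succ] at h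
  simp only [Real.rpow_natCast] at h
  simp_rw [mul_comm (Real.exp _), h, Nat.succ_eq_add_one]
  ring

theorem integrableOn_exp_neg_mul_mul_pow {x : ℝ} (hx : 0 < x) (n : ℕ) :
    IntegrableOn (fun t ↦ Real.exp (-(x * t)) * t ^ n) (Ioi 0) :=
  .of_integral_ne_zero <| by rw [integral_exp_neg_mul_mul_pow hx]; positivity

lemma exp_neg_mul_mul_pow_div_factorial_eq (c : ℂ) (x t : ℝ) (n : ℕ) :
    Complex.exp (-(x * t : ℝ)) * (c * (t : ℂ) ^ n / n !)
      = c / n ! * ((Real.exp (-(x * t)) * t ^ n : ℝ) : ℂ) := by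
  push_cast
  ring

section LaplaceOfPowerSeries

variable {x : ℝ}

lemma integrableOn_exp_neg_mul_mul_pow_div_factorial (hx : 0 < x) (c : ℂ) (n : ℕ) :
    IntegrableOn (fun t : ℝ ↦ Complex.exp (-(x * t : ℝ)) * (c * (t : ℂ) ^ n / n !)) (Ioi 0) := by
  simp_rw [exp_neg_mul_mul_pow_div_factorial_eq]
  exact (integrableOn_exp_neg_mul_mul_pow hx n).ofReal.const_mul _

lemma integral_exp_neg_mul_mul_pow_div_factorial (hx : 0 < x) (c : ℂ) (n : ℕ) :
    ∫ t in Ioi (0 : ℝ), Complex.exp (-(x * t : ℝ)) * (c * (t : ℂ) ^ n / n !)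
      = c / (x : ℂ) ^ (n + 1) := by
  simp_rw [exp_neg_mul_mul_pow_div_factorial_eq, integral_const_mul, integral_complex_ofReal,
    integral_exp_neg_mul_mul_pow hx]
  push_cast
  exact div_mul_div_cancel₀ (Nat.cast_ne_zero.2 n.factorial_ne_zero)

lemma integral_norm_exp_neg_mul_mul_pow_div_factorial (hx : 0 < x) (c : ℂ) (n : ℕ) :
    ∫ t in Ioi (0 : ℝ), ‖Complex.exp (-(x * t : ℝ)) * (c * (t : ℂ) ^ n / n !)‖
      = ‖c‖ / x ^ (n + 1) := by
  have h_norm : ∀ t ∈ Ioi (0 : ℝ), ‖Complex.exp (-(x * t : ℝ)) * (c * (t : ℂ) ^ n / n !)‖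
      = ‖c‖ / n ! * (Real.exp (-(x * t)) * t ^ n) := fun t ht ↦ by
    rw [exp_neg_mul_mul_pow_div_factorial_eq, norm_mul, norm_div, Complex.norm_natCast,
      Complex.norm_real, Real.norm_of_nonneg (by have : 0 < t := ht; positivity)]
  rw [setIntegral_congr_fun measurableSet_Ioi h_norm, integral_const_mul,
    integral_exp_neg_mul_mul_pow hx]
  exact div_mul_div_cancel₀ (Nat.cast_ne_zero.2 n.factorial_ne_zero)

lemma summable_integral_norm_exp_neg_mul_mul_pow_div_factorial (hx : 0 < x) {a : ℕ → ℂ}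
    (ha : Summable fun n ↦ ‖a n‖ / x ^ (n + 1)) :
    Summable fun n ↦
      ∫ t in Ioi (0 : ℝ), ‖Complex.exp (-(x * t : ℝ)) * (a n * (t : ℂ) ^ n / n !)‖ := by
  simpa only [integral_norm_exp_neg_mul_mul_pow_div_factorial hx] using ha

theorem integrableOn_tsum_exp_neg_mul_mul_pow_div_factorial (hx : 0 < x) {a : ℕ → ℂ}
    (ha : Summable fun n ↦ ‖a n‖ / x ^ (n + 1)) :
    IntegrableOn (fun t : ℝ ↦ ∑' n, Complex.exp (-(x * t : ℝ)) * (a n * (t : ℂ) ^ n / n !))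
      (Ioi 0) :=
  integrable_tsum_of_summable_integral_norm
    (fun n ↦ integrableOn_exp_neg_mul_mul_pow_div_factorial hx (a n) n)
    (summable_integral_norm_exp_neg_mul_mul_pow_div_factorial hx ha)

theorem integral_tsum_exp_neg_mul_mul_pow_div_factorial (hx : 0 < x) {a : ℕ → ℂ}
    (ha : Summable fun n ↦ ‖a n‖ / x ^ (n + 1)) :
    ∫ t in Ioi (0 : ℝ), ∑' n, Complex.exp (-(x * t : ℝ)) * (a n * (t : ℂ) ^ n / n !)
      = ∑' n, a n / (x : ℂ) ^ (n + 1) := by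
  rw [← integral_tsum_of_summable_integral_norm
    (fun n ↦ integrableOn_exp_neg_mul_mul_pow_div_factorial hx (a n) n)
    (summable_integral_norm_exp_neg_mul_mul_pow_div_factorial hx ha)]
  simp_rw [integral_exp_neg_mul_mul_pow_div_factorial hx]

end LaplaceOfPowerSeries

lemma summable_norm_div_pow_of_norm_le_pow {a : ℕ → ℂ} {C x : ℝ}
    (ha : ∀ n, ‖a n‖ ≤ C ^ (n + 1)) (hC : 0 ≤ C) (hx : C < x) :
    Summable fun n ↦ ‖a n‖ / x ^ (n + 1) := by
  have hx0 : 0 < x := hC.trans_lt hx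
  have h_geom : Summable fun n ↦ (C / x) ^ (n + 1) :=
    (summable_nat_add_iff 1).2 <|
      summable_geometric_of_lt_one (by positivity) ((div_lt_one hx0).2 hx)
  refine h_geom.of_nonneg_of_le (fun n ↦ by positivity) fun n ↦ ?_
  rw [div_pow]
  gcongr
  exact ha n

theorem laplace_transform_of_EFunction_general
    (a : ℕ → ℂ) (C : ℝ)
    (ha : ∀ n : ℕ, ‖a n‖ ≤ C ^ (n + 1))
    (f : ℝ → ℂ) (hf : ∀ t : ℝ, f t = ∑' n : ℕ, a n * (t : ℂ) ^ n / (n.factorial : ℂ)) :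
    ∀ x : ℝ, C < x →
      IntegrableOn (fun t : ℝ => Complex.exp (-(x * t : ℝ)) * f t) (Set.Ici 0) ∧
      Summable (fun n : ℕ => ‖a n / (x : ℂ) ^ (n + 1)‖) ∧
      ∫ t in Set.Ioi (0 : ℝ), Complex.exp (-(x * t : ℝ)) * f t
        = ∑' n : ℕ, a n / (x : ℂ) ^ (n + 1) := by
  intro x hx
  have hC : 0 ≤ C := (norm_nonneg _).trans (by simpa using ha 0)
  have hx0 : 0 < x := hC.trans_lt hx
  have h_summable := summable_norm_div_pow_of_norm_le_pow ha hC hx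
  have h_integrand : (fun t : ℝ ↦ Complex.exp (-(x * t : ℝ)) * f t)
      = fun t ↦ ∑' n, Complex.exp (-(x * t : ℝ)) * (a n * (t : ℂ) ^ n / n !) := by
    ext t
    rw [hf, tsum_mul_left]
  refine ⟨?_, ?_, ?_⟩
  · rw [integrableOn_Ici_iff_integrableOn_Ioi, h_integrand]
    exact integrableOn_tsum_exp_neg_mul_mul_pow_div_factorial hx0 h_summable
  · simpa only [norm_div, norm_pow, Complex.norm_real, Real.norm_of_nonneg hx0.le] using h_summable
  · rw [h_integrand]
    exact integral_tsum_exp_neg_mul_mul_pow_div_factorial hx0 h_summable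

/-- Laplace transform of an entire function with coefficient bound
`|a_n| ≤ C^(n+1)`: for `x > C`, `∫_0^∞ e^{−xt} (∑ a_n t^n/n!) dt = ∑ a_n/x^{n+1}`. -/
theorem laplace_transform_of_EFunction
    (a : ℕ → ℂ) (C : ℝ) (hC : 0 < C)
    (ha : ∀ n : ℕ, ‖a n‖ ≤ C ^ (n + 1))
    (f : ℝ → ℂ) (hf : ∀ t : ℝ, f t = ∑' n : ℕ, a n * (t : ℂ) ^ n / (n.factorial : ℂ)) :
    ∀ x : ℝ, C < x →
      IntegrableOn (fun t : ℝ => Complex.exp (-(x * t : ℝ)) * f t) (Set.Ici 0) ∧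
      Summable (fun n : ℕ => ‖a n / (x : ℂ) ^ (n + 1)‖) ∧
      ∫ t in Set.Ioi (0 : ℝ), Complex.exp (-(x * t : ℝ)) * f t
        = ∑' n : ℕ, a n / (x : ℂ) ^ (n + 1) :=
  laplace_transform_of_EFunction_general a C ha f hf
end

section
/- Let f : ℕ → ℂ be a sequence such that for every ε > 0 there exists N with |f(n)| ≤ (n!)^ε for all n ≥ N. Then the series ∑_k f(k)/k! converges absolutely; assume moreover that ∑'_{k} f(k)/k! = 0. Define g(n) = n!·∑_{k=0}^n f(k)/k!. Then for every ε > 0 there exists N such that |g(n)| ≤ (n!)^ε for all n ≥ N. -/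
open Finset

lemma key_bound (f : ℕ → ℂ) (δ : ℝ) (hδ0 : 0 < δ) (hδ1 : δ ≤ 1/2) (n j : ℕ)
    (h : ‖f (n+1+j)‖ ≤ ((n+1+j).factorial : ℝ) ^ δ) :
    (n.factorial : ℝ) * ‖f (n+1+j) / ((n+1+j).factorial : ℂ)‖ ≤
      (n.factorial : ℝ) ^ δ * (((n : ℝ) + 1) ^ (δ - 1)) ^ (j+1) := by
  set K : ℝ := ((n+1+j).factorial : ℝ) with hKdef
  have hK : (0:ℝ) < K := by positivity
  have hA : (0:ℝ) < (n.factorial : ℝ) := by positivity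
  have hB : (0:ℝ) < ((n:ℝ)+1) ^ (j+1) := by positivity
  have hAB : (n.factorial : ℝ) * ((n:ℝ)+1) ^ (j+1) ≤ K := by
    have := Nat.factorial_mul_pow_le_factorial (m := n) (n := j+1)
    have h2 : n + (j+1) = n+1+j := by omega
    rw [h2] at this
    calc (n.factorial : ℝ) * ((n:ℝ)+1) ^ (j+1)
        = ((n.factorial * (n+1) ^ (j+1) : ℕ) : ℝ) := by push_cast; ring
      _ ≤ K := by exact_mod_cast Nat.cast_le.mpr this
  have hnorm : ‖f (n+1+j) / ((n+1+j).factorial : ℂ)‖ = ‖f (n+1+j)‖ / K := by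
    rw [norm_div, Complex.norm_natCast]
  rw [hnorm]
  have step1 : (n.factorial : ℝ) * (‖f (n+1+j)‖ / K) ≤ (n.factorial : ℝ) * (K ^ δ / K) := by
    gcongr
  refine step1.trans ?_
  have hKd : K ^ δ / K = K ^ (δ - 1) := (Real.rpow_sub_one hK.ne' δ).symm
  rw [hKd]
  have step2 : K ^ (δ-1) ≤ ((n.factorial : ℝ) * ((n:ℝ)+1) ^ (j+1)) ^ (δ-1) :=
    Real.rpow_le_rpow_of_nonpos (by positivity) hAB (by linarith)
  have step3 : (n.factorial : ℝ) * K ^ (δ-1)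
      ≤ (n.factorial : ℝ) * ((n.factorial : ℝ) * ((n:ℝ)+1) ^ (j+1)) ^ (δ-1) :=
    mul_le_mul_of_nonneg_left step2 hA.le
  refine step3.trans (le_of_eq ?_)
  rw [Real.mul_rpow hA.le hB.le]
  have e1 : (n.factorial : ℝ) * (n.factorial : ℝ) ^ (δ-1) = (n.factorial : ℝ) ^ δ := by
    nth_rewrite 1 [← Real.rpow_one (n.factorial : ℝ)]
    rw [← Real.rpow_add hA]; ring_nf
  have e2 : (((n:ℝ)+1) ^ (j+1)) ^ (δ-1) = (((n:ℝ)+1) ^ (δ-1)) ^ (j+1) := by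
    rw [← Real.rpow_natCast (((n:ℝ)+1) ^ (δ-1)) (j+1), ← Real.rpow_natCast ((n:ℝ)+1) (j+1),
      ← Real.rpow_mul (by positivity), ← Real.rpow_mul (by positivity), mul_comm]
  rw [e2, ← mul_assoc, e1]

set_option maxHeartbeats 1000000 in
/-- Tail estimate of Proposition 12: if `|f_n| ≤ (n!)^ε` eventually for every
`ε > 0`, then `∑ f_k/k!` converges absolutely, and if moreover its sum is `0`,
the partial sums `g_n = n!·∑_{k≤n} f_k/k!` satisfy `|g_n| ≤ (n!)^ε` eventually. -/
theorem partial_sums_bound_of_vanishing_sum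
    (f : ℕ → ℂ)
    (hf : ∀ ε : ℝ, 0 < ε → ∃ N : ℕ, ∀ n ≥ N, ‖f n‖ ≤ (n.factorial : ℝ) ^ ε) :
    Summable (fun k : ℕ => ‖f k / (k.factorial : ℂ)‖) ∧
    ((∑' k : ℕ, f k / (k.factorial : ℂ)) = 0 →
      ∀ ε : ℝ, 0 < ε → ∃ N : ℕ, ∀ n ≥ N,
        ‖(n.factorial : ℂ) * ∑ k ∈ Finset.range (n + 1), f k / (k.factorial : ℂ)‖
          ≤ (n.factorial : ℝ) ^ ε) := by
  set S : ℕ → ℂ := fun k => f k / (k.factorial : ℂ) with hSdef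
  -- Part 1: summability
  obtain ⟨N₀, hN₀⟩ := hf (1/2) (by norm_num)
  have hsumm : Summable (fun k : ℕ => ‖S k‖) := by
    set M : ℕ := N₀ + 1 with hMdef
    rw [← summable_nat_add_iff (M+1)]
    rw [← summable_mul_left_iff (f := fun j => ‖S (j + (M+1))‖)
      (a := (M.factorial : ℝ)) (by positivity)]
    set r : ℝ := ((M:ℝ)+1) ^ ((1:ℝ)/2 - 1) with hrdef
    have hr0 : 0 ≤ r := Real.rpow_nonneg (by positivity) _
    have hM1 : (1:ℝ) < (M:ℝ) + 1 := by
      have : (1:ℝ) ≤ (M:ℝ) := by exact_mod_cast Nat.one_le_iff_ne_zero.mpr (by omega)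
      linarith
    have hr1 : r < 1 := Real.rpow_lt_one_of_one_lt_of_neg hM1 (by norm_num)
    apply Summable.of_nonneg_of_le (f := fun j => ((M.factorial : ℝ) ^ ((1:ℝ)/2) * r) * r ^ j)
      (fun j => by positivity)
    · intro j
      have hb := key_bound f (1/2) (by norm_num) (le_refl _) M j
        (hN₀ (M+1+j) (by omega))
      have hidx : j + (M+1) = M+1+j := by omega
      simp only [hSdef, hidx]
      calc (M.factorial : ℝ) * ‖f (M+1+j) / (((M+1+j).factorial : ℕ) : ℂ)‖
          ≤ (M.factorial : ℝ) ^ ((1:ℝ)/2) * r ^ (j+1) := hb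
        _ = ((M.factorial : ℝ) ^ ((1:ℝ)/2) * r) * r ^ j := by ring
    · exact (summable_geometric_of_lt_one hr0 hr1).mul_left _
  refine ⟨hsumm, ?_⟩
  intro hsum ε hε
  have hS' : Summable S := hsumm.of_norm
  set δ : ℝ := min ε 1 / 2 with hδdef
  have hδ0 : 0 < δ := by positivity
  have hδ1 : δ ≤ 1/2 := by
    have : min ε 1 ≤ 1 := min_le_right _ _
    simp only [hδdef]; linarith
  have hδε : δ ≤ ε := by
    have : min ε 1 ≤ ε := min_le_left _ _
    simp only [hδdef]; linarith
  obtain ⟨N₁, hN₁⟩ := hf δ hδ0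
  refine ⟨max N₁ 3, fun n hn => ?_⟩
  have hnN₁ : N₁ ≤ n := le_trans (le_max_left _ _) hn
  have hn3 : 3 ≤ n := le_trans (le_max_right _ _) hn
  set r : ℝ := ((n:ℝ)+1) ^ (δ - 1) with hrdef
  have hr0 : 0 ≤ r := Real.rpow_nonneg (by positivity) _
  have hn4 : (4:ℝ) ≤ (n:ℝ)+1 := by
    have : (3:ℝ) ≤ (n:ℝ) := by exact_mod_cast hn3
    linarith
  have hr_half : r ≤ 1/2 := by
    have h1 : r ≤ ((n:ℝ)+1) ^ (-(1:ℝ)/2) := by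
      apply Real.rpow_le_rpow_of_exponent_le (by linarith)
      linarith
    have h2 : ((n:ℝ)+1) ^ (-(1:ℝ)/2) ≤ (4:ℝ) ^ (-(1:ℝ)/2) :=
      Real.rpow_le_rpow_of_nonpos (by norm_num) hn4 (by norm_num)
    have h3 : (4:ℝ) ^ (-(1:ℝ)/2) = 1/2 := by
      rw [show (4:ℝ) = 2 ^ (2:ℕ) by norm_num, ← Real.rpow_natCast (2:ℝ) 2,
        ← Real.rpow_mul (by norm_num), show ((2:ℕ):ℝ) * (-(1:ℝ)/2) = -1 by push_cast; ring,
        Real.rpow_neg_one]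
      norm_num
    linarith
  have hr1 : r < 1 := by linarith
  -- tail summabilities
  have htail_norm : Summable (fun j => ‖S (j + (n+1))‖) := (summable_nat_add_iff (n+1)).mpr hsumm
  have htail : Summable (fun j => S (j + (n+1))) := (summable_nat_add_iff (n+1)).mpr hS'
  have hgeo : Summable (fun j : ℕ => (n.factorial : ℝ) ^ δ * r ^ (j+1)) := by
    have : Summable (fun j : ℕ => ((n.factorial : ℝ) ^ δ * r) * r ^ j) :=
      (summable_geometric_of_lt_one hr0 hr1).mul_left _
    convert this using 2 with j
    ring
  have hkey : ∀ j : ℕ, (n.factorial : ℝ) * ‖S (j + (n+1))‖ ≤ (n.factorial : ℝ) ^ δ * r ^ (j+1) := by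
    intro j
    have hidx : j + (n+1) = n+1+j := by omega
    rw [hidx]
    exact key_bound f δ hδ0 hδ1 n j (hN₁ (n+1+j) (by omega))
  -- main computation
  have heq : ∑ k ∈ Finset.range (n + 1), S k = -(∑' j, S (j + (n+1))) := by
    have := Summable.sum_add_tsum_nat_add (f := S) (n+1) hS'
    rw [hsum] at this
    linear_combination this
  calc ‖(n.factorial : ℂ) * ∑ k ∈ Finset.range (n + 1), S k‖
      = (n.factorial : ℝ) * ‖∑' j, S (j + (n+1))‖ := by
        rw [heq, norm_mul, norm_neg, Complex.norm_natCast]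
    _ ≤ (n.factorial : ℝ) * ∑' j, ‖S (j + (n+1))‖ := by
        gcongr
        exact norm_tsum_le_tsum_norm htail_norm
    _ = ∑' j, (n.factorial : ℝ) * ‖S (j + (n+1))‖ := (tsum_mul_left).symm
    _ ≤ ∑' j, (n.factorial : ℝ) ^ δ * r ^ (j+1) := by
        apply Summable.tsum_le_tsum hkey (htail_norm.mul_left _) hgeo
    _ = (n.factorial : ℝ) ^ δ * (r * (1 - r)⁻¹) := by
        rw [tsum_mul_left]
        congr 1
        calc ∑' j : ℕ, r ^ (j+1) = ∑' j : ℕ, r * r ^ j := by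
              congr 1; funext j; ring
          _ = r * ∑' j : ℕ, r ^ j := tsum_mul_left
          _ = r * (1 - r)⁻¹ := by rw [tsum_geometric_of_lt_one hr0 hr1]
    _ ≤ (n.factorial : ℝ) ^ δ * 1 := by
        have hrr : r * (1 - r)⁻¹ ≤ 1 := by
          rw [mul_inv_le_iff₀ (by linarith)]
          linarith
        exact mul_le_mul_of_nonneg_left hrr (by positivity)
    _ ≤ (n.factorial : ℝ) ^ ε := by
        rw [mul_one]
        apply Real.rpow_le_rpow_of_exponent_le _ hδε
        exact_mod_cast Nat.one_le_iff_ne_zero.mpr (Nat.factorial_pos n).ne'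
end

section
/- Let K be a subfield of ℂ that is a finite extension of ℚ. Let n ≥ 1 and p_0, …, p_n ∈ K[z] with p_n ≠ 0. Let T ∈ K[z] be a nonzero polynomial with all coefficients integral over ℤ, and let H₁ be the n×n matrix over K[z] with (H₁)_{i,i+1} = T for 0 ≤ i ≤ n−2, last row satisfying p_n·(H₁)_{n−1,j} = −T·p_j for 0 ≤ j ≤ n−1, and all other entries 0; assume all coefficients of all entries of H₁ are integral over ℤ. Define H_{s+1} = H_s·H₁ + T·H_s' − s·T'·H_s and assume the Galochkin condition in the large sense: for every ε > 0 there exists s₀ such that for every s ≥ s₀ there is a positive integer q ≤ (s!)^ε such that for all 1 ≤ m ≤ s, every coefficient of every entry of (q/m!)·H_m is integral over ℤ. Let α ∈ K with p_n(α) ≠ 0. Then there exist formal power series f_1, …, f_n ∈ K⟦z⟧, linearly independent over K, such that each f_i is a G-function in the large sense and each satisfies ∑_{k=0}^n (p_k composed with X + C(α))·f_i^{(k)} = 0 (formal derivatives). -/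
/-!
Translate to `α`. Since `p n (α) ≠ 0`, the equation determines the coefficient `a (m + n)` of a
formal solution from the lower ones, with divisor `p n (α) · (m + 1) ⋯ (m + n)`; prescribing
`a 0, …, a (n - 1)` gives `n` independent solutions, and the recursion bounds every conjugate of
`a j` by `C ^ j`.

For the denominators, iterate the companion system `p n · y' = G₁ y`, `y = (f, …, f⁽ⁿ⁻¹⁾)`: with
`G (s + 1) = G s G₁ + p n G s' - s p n' G s` one gets `p n ^ s f⁽ˢ⁾ = ∑ⱼ G s 0 j f⁽ʲ⁾`, hence
`p n (α) ^ s · s! a s = ∑ⱼ G s 0 j (α) · j! a j`. The matrices `H s` of the Galochkin condition are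
built in the same way from `T` and `H 1`, and `T • G₁ = p n • H 1` propagates to
`T ^ s • G s = p n ^ s • H s`. Reading this identity at `α` to the order of vanishing of `T`
expresses `G s 0 j (α)` through the Taylor coefficients of `p n ^ s · H s 0 j` at `α`, whose
denominators are those of `H s / s!` up to a factor `A ^ s`.
-/

open Polynomial PowerSeries Finset

noncomputable section

/-- `f ∈ K⟦z⟧` is a G-function in the large sense. -/
def IsGFunctionLarge (K : Subfield ℂ) (f : PowerSeries K) : Prop :=
  (∃ (m : ℕ) (q : ℕ → Polynomial K), (∃ j ≤ m, q j ≠ 0) ∧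
      ∑ j ∈ Finset.range (m + 1),
        (q j : PowerSeries K) * (PowerSeries.derivativeFun^[j] f) = 0) ∧
  (∀ ε : ℝ, 0 < ε → ∃ N : ℕ, ∀ k ≥ N, ∀ σ : K →+* ℂ,
      ‖σ (PowerSeries.coeff k f)‖ ≤ (k.factorial : ℝ) ^ ε) ∧
  (∀ ε : ℝ, 0 < ε → ∃ N : ℕ, ∀ k ≥ N, ∃ d : ℕ, 0 < d ∧ (d : ℝ) ≤ (k.factorial : ℝ) ^ ε ∧
      ∀ j ≤ k, IsIntegral ℤ ((d : K) * PowerSeries.coeff j f))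

section IterDerivMatrix

open Matrix

variable {R A : Type*} [CommRing R] [CommRing A] [Algebra R A] {ι : Type*} [Fintype ι]

theorem Derivation.leibniz_mulVec (d : Derivation R A A) (M : Matrix ι ι A) (y : ι → A) :
    (fun i => d ((M *ᵥ y) i)) = M.map d *ᵥ y + M *ᵥ fun j => d (y j) := by
  ext i
  simp only [Matrix.mulVec, dotProduct, map_sum, Derivation.leibniz, smul_eq_mul, Pi.add_apply,
    Matrix.map_apply, ← sum_add_distrib]
  exact sum_congr rfl fun j _ => by ring

variable [DecidableEq ι]

/-- For `U = T` and `G = H 1` these are the matrices `H s` of the Galochkin condition. -/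
def iterDerivMatrix (d : Derivation R A A) (U : A) (G : Matrix ι ι A) : ℕ → Matrix ι ι A
  | 0 => 1
  | s + 1 => iterDerivMatrix d U G s * G + U • (iterDerivMatrix d U G s).map d
      - ((s : A) * d U) • iterDerivMatrix d U G s

variable (d : Derivation R A A) (U : A) (G : Matrix ι ι A)

theorem iterDerivMatrix_one : iterDerivMatrix d U G 1 = G := by
  ext i j
  simp [iterDerivMatrix, Matrix.one_apply, apply_ite d]

theorem eq_iterDerivMatrix {H : ℕ → Matrix ι ι A}
    (hH : ∀ s, 1 ≤ s → H (s + 1) = H s * H 1 + U • (H s).map d - ((s : A) * d U) • H s) :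
    ∀ s, 1 ≤ s → H s = iterDerivMatrix d U (H 1) s := by
  intro s hs
  induction s, hs using Nat.le_induction with
  | base => rw [iterDerivMatrix_one]
  | succ s hs ih => rw [hH s hs, iterDerivMatrix, ← ih]

theorem Derivation.mul_map_pow (U : A) (s : ℕ) : U * d (U ^ s) = (s : A) * d U * U ^ s := by
  rw [Derivation.leibniz_pow]
  rcases s with _ | s
  · simp
  · simp only [smul_eq_mul, nsmul_eq_mul, Nat.add_sub_cancel]; push_cast; ring

theorem pow_smul_iterate_eq_iterDerivMatrix_mulVec {y : ι → A}
    (hy : U • (fun j => d (y j)) = G *ᵥ y) (s : ℕ) :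
    U ^ s • (fun j => (⇑d)^[s] (y j)) = iterDerivMatrix d U G s *ᵥ y := by
  induction s with
  | zero => simp [iterDerivMatrix]
  | succ s ih =>
    have key := congrArg (fun v => U • fun i => d (v i)) ih
    simp only [Derivation.leibniz_mulVec, Pi.smul_apply, smul_eq_mul, Derivation.leibniz] at key
    have hG : iterDerivMatrix d U G s *ᵥ (G *ᵥ y)
        = U • (iterDerivMatrix d U G s *ᵥ fun j => d (y j)) := by
      rw [← hy, mulVec_smul]
    rw [iterDerivMatrix, sub_mulVec, add_mulVec, ← mulVec_mulVec, hG, smul_mulVec,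
      smul_mulVec]
    ext i
    have key_i := congrFun key i
    have ih_i := congrFun ih i
    simp only [Pi.smul_apply, Pi.add_apply, smul_eq_mul] at key_i ih_i
    simp only [Function.iterate_succ_apply', Pi.smul_apply, Pi.add_apply, Pi.sub_apply,
      smul_eq_mul]
    linear_combination key_i - ((⇑d)^[s] (y i)) * d.mul_map_pow U s - (s * d U) * ih_i

theorem pow_smul_iterDerivMatrix_eq {T : A} {H : Matrix ι ι A} (h : T • G = U • H) (s : ℕ) :
    T ^ s • iterDerivMatrix d U G s = U ^ s • iterDerivMatrix d T H s := by
  induction s with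
  | zero => simp [iterDerivMatrix]
  | succ s ih =>
    set Gs := iterDerivMatrix d U G s
    set Hs := iterDerivMatrix d T H s
    have hprod : T ^ (s + 1) • (Gs * G) = U ^ (s + 1) • (Hs * H) := by
      calc T ^ (s + 1) • (Gs * G) = (T ^ s • Gs) * (T • G) := by
            rw [Matrix.smul_mul, Matrix.mul_smul, smul_smul, pow_succ]
        _ = (U ^ s • Hs) * (U • H) := by rw [ih, h]
        _ = U ^ (s + 1) • (Hs * H) := by
            rw [Matrix.smul_mul, Matrix.mul_smul, smul_smul, pow_succ]
    ext i j
    have hprod_ij := congrFun (congrFun hprod i) j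
    have ih_ij := congrFun (congrFun ih i) j
    simp only [Matrix.smul_apply, smul_eq_mul] at hprod_ij ih_ij
    have hd := congrArg d ih_ij
    simp only [Derivation.leibniz, smul_eq_mul] at hd
    simp only [iterDerivMatrix, Matrix.smul_apply, Matrix.sub_apply, Matrix.add_apply,
      Matrix.map_apply, smul_eq_mul]
    linear_combination hprod_ij + (T * U) * hd - U * Gs i j * d.mul_map_pow T s
      + T * Hs i j * d.mul_map_pow U s - ((s : A) * d U * T + (s : A) * d T * U) * ih_ij

theorem map_iterDerivMatrix {S B : Type*} [CommRing S] [CommRing B] [Algebra S B]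
    (d' : Derivation S B B) (φ : A →+* B) (hφ : ∀ a, φ (d a) = d' (φ a)) (s : ℕ) :
    (iterDerivMatrix d U G s).map φ = iterDerivMatrix d' (φ U) (G.map φ) s := by
  induction s with
  | zero => exact Matrix.map_one φ (map_zero φ) (map_one φ)
  | succ s ih =>
    rw [iterDerivMatrix, iterDerivMatrix, ← ih]
    ext i j
    simp [Matrix.mul_apply, hφ]

end IterDerivMatrix

theorem natDegree_iterDerivMatrix_le {R ι : Type*} [CommRing R] [Fintype ι] [DecidableEq ι]
    {U : R[X]} {G : Matrix ι ι R[X]} {D : ℕ} (hU : U.natDegree ≤ D)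
    (hG : ∀ i j, (G i j).natDegree ≤ D) (s : ℕ) (i j : ι) :
    (iterDerivMatrix derivative' U G s i j).natDegree ≤ s * D := by
  induction s generalizing i j with
  | zero => by_cases h : i = j <;> simp [iterDerivMatrix, Matrix.one_apply, h]
  | succ s ih =>
    have hdU : ((s : R[X]) * derivative U).natDegree ≤ D :=
      natDegree_mul_le.trans (by simpa using (natDegree_derivative_le U).trans (by omega))
    simp only [iterDerivMatrix, Matrix.sub_apply, Matrix.add_apply, Matrix.smul_apply,
      Matrix.map_apply, smul_eq_mul, Matrix.mul_apply, derivative'_apply]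
    refine (natDegree_sub_le _ _).trans (max_le ((natDegree_add_le _ _).trans (max_le ?_ ?_)) ?_)
    · exact natDegree_sum_le_of_forall_le _ _ fun k _ =>
        (natDegree_mul_le_of_le (ih i k) (hG k j)).trans_eq (by ring)
    · exact (natDegree_mul_le_of_le hU
        ((natDegree_derivative_le _).trans ((Nat.sub_le _ _).trans (ih i j)))).trans_eq (by ring)
    · exact (natDegree_mul_le_of_le hdU (ih i j)).trans_eq (by ring)

theorem exists_natDegree_le_mul {R ι : Type*} [CommRing R] [Fintype ι] [DecidableEq ι]
    {T : R[X]} {H : ℕ → Matrix ι ι R[X]}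
    (hH : ∀ s, 1 ≤ s → H (s + 1)
      = H s * H 1 + T • (H s).map derivative - ((s : R[X]) * derivative T) • H s) :
    ∃ D : ℕ, ∀ m ≥ 1, ∀ i j, (H m i j).natDegree ≤ m * D := by
  refine ⟨T.natDegree + ∑ i, ∑ j, (H 1 i j).natDegree, fun m hm i j => ?_⟩
  rw [eq_iterDerivMatrix derivative' T hH m hm]
  refine natDegree_iterDerivMatrix_le (by omega) (fun i j => ?_) m i j
  have := (single_le_sum (fun j _ => Nat.zero_le _) (mem_univ j)).trans
    (single_le_sum (f := fun i => ∑ j, (H 1 i j).natDegree) (fun i _ => Nat.zero_le _)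
      (mem_univ i))
  omega

section Companion

open Matrix

variable {R : Type*} [CommRing R]

/-- `u n` times the companion matrix of the operator `∑ₖ u k ∂ᵏ`. -/
def scaledCompanion (u : ℕ → R) (n : ℕ) : Matrix (Fin n) (Fin n) R :=
  fun i j => if (j : ℕ) = i + 1 then u n else if (i : ℕ) = n - 1 then -u j else 0

theorem scaledCompanion_map {S : Type*} [CommRing S] (φ : R →+* S) (u : ℕ → R) (n : ℕ) :
    (scaledCompanion u n).map φ = scaledCompanion (φ ∘ u) n := by
  ext i j
  simp only [scaledCompanion, Matrix.map_apply, Function.comp_apply]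
  split_ifs <;> simp

theorem smul_scaledCompanion_eq {u : ℕ → R} {n : ℕ} {T : R} {H₁ : Matrix (Fin n) (Fin n) R}
    (hsup : ∀ i j : Fin n, (j : ℕ) = i + 1 → H₁ i j = T)
    (hlastrow : ∀ i j : Fin n, (i : ℕ) = n - 1 → u n * H₁ i j = -(T * u j))
    (hzero : ∀ i j : Fin n, (i : ℕ) ≠ n - 1 → (j : ℕ) ≠ i + 1 → H₁ i j = 0) :
    T • scaledCompanion u n = u n • H₁ := by
  ext i j
  simp only [scaledCompanion, Matrix.smul_apply, smul_eq_mul]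
  split_ifs with hij hi
  · rw [hsup i j hij, mul_comm]
  · rw [hlastrow i j hi, mul_neg]
  · rw [hzero i j hi hij, mul_zero, mul_zero]

theorem smul_derivative_eq_scaledCompanion_mulVec {A : Type*} [CommRing A] [Algebra R A]
    (d : Derivation R A A) {u : ℕ → A} {n : ℕ} {f : A}
    (hf : ∑ k ∈ range (n + 1), u k * (⇑d)^[k] f = 0) :
    u n • (fun j : Fin n => d ((⇑d)^[j] f)) = scaledCompanion u n *ᵥ fun j => (⇑d)^[j] f := by
  ext j
  simp only [Pi.smul_apply, smul_eq_mul, mulVec, dotProduct, scaledCompanion, ite_mul, zero_mul,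
    ← Function.iterate_succ_apply' (⇑d)]
  by_cases hj : (j : ℕ) + 1 < n
  · simp only [show (j : ℕ) ≠ n - 1 by omega, if_false]
    rw [sum_eq_single ⟨(j : ℕ) + 1, hj⟩ (fun i _ hi => if_neg fun h => hi (Fin.ext h))
      (fun h => absurd (mem_univ _) h), if_pos rfl]
  · simp only [show (j : ℕ) = n - 1 by omega, if_true, neg_mul]
    rw [sum_congr rfl fun i _ => if_neg (by omega), sum_neg_distrib,
      Fin.sum_univ_eq_sum_range (fun k => u k * (⇑d)^[k] f), Nat.succ_eq_add_one,
      Nat.sub_add_cancel (by omega : 1 ≤ n)]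
    rw [sum_range_succ] at hf
    exact eq_neg_of_add_eq_zero_right hf

end Companion

theorem pow_smul_iterDerivMatrix_scaledCompanion {R A : Type*} [CommRing R] [CommRing A]
    [Algebra R A] (d : Derivation R A A) {u : ℕ → A} {n : ℕ} {T : A}
    {H : ℕ → Matrix (Fin n) (Fin n) A}
    (hsup : ∀ i j : Fin n, (j : ℕ) = i + 1 → H 1 i j = T)
    (hlastrow : ∀ i j : Fin n, (i : ℕ) = n - 1 → u n * H 1 i j = -(T * u j))
    (hzero : ∀ i j : Fin n, (i : ℕ) ≠ n - 1 → (j : ℕ) ≠ i + 1 → H 1 i j = 0)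
    (hH : ∀ s, 1 ≤ s → H (s + 1) = H s * H 1 + T • (H s).map d - ((s : A) * d T) • H s)
    {m : ℕ} (hm : 1 ≤ m) :
    T ^ m • iterDerivMatrix d (u n) (scaledCompanion u n) m = u n ^ m • H m := by
  rw [eq_iterDerivMatrix d T hH m hm]
  exact pow_smul_iterDerivMatrix_eq d _ _ (smul_scaledCompanion_eq hsup hlastrow hzero) m

section IntegralPowerSeries

variable (K : Type*) [CommRing K]

def integralPowerSeries : Subring K⟦X⟧ where
  carrier := {f | ∀ k, IsIntegral ℤ (coeff k f)}
  mul_mem' hf hg k := by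
    rw [PowerSeries.coeff_mul]
    exact IsIntegral.sum _ fun x _ => (hf _).mul (hg _)
  one_mem' k := by
    rw [PowerSeries.coeff_one]
    split_ifs
    exacts [isIntegral_one, isIntegral_zero]
  add_mem' hf hg k := by
    rw [map_add]
    exact (hf k).add (hg k)
  zero_mem' k := by
    rw [map_zero]
    exact isIntegral_zero
  neg_mem' hf k := by
    rw [map_neg]
    exact (hf k).neg

variable {K}

theorem mem_integralPowerSeries {f : K⟦X⟧} :
    f ∈ integralPowerSeries K ↔ ∀ k, IsIntegral ℤ (coeff k f) :=
  Iff.rfl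

theorem C_mem_integralPowerSeries {x : K} (hx : IsIntegral ℤ x) :
    PowerSeries.C x ∈ integralPowerSeries K := fun k => by
  rw [PowerSeries.coeff_C]
  split_ifs
  exacts [hx, isIntegral_zero]

theorem X_mem_integralPowerSeries : (PowerSeries.X : K⟦X⟧) ∈ integralPowerSeries K := fun k => by
  rw [PowerSeries.coeff_X]
  split_ifs
  exacts [isIntegral_one, isIntegral_zero]

theorem C_mul_coe_mem_integralPowerSeries_iff {c : K} {u : K[X]} :
    PowerSeries.C c * (u : K⟦X⟧) ∈ integralPowerSeries K ↔ ∀ k, IsIntegral ℤ (c * u.coeff k) := by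
  simp only [mem_integralPowerSeries, PowerSeries.coeff_C_mul, Polynomial.coeff_coe]

theorem C_mul_coe_taylor_mem_integralPowerSeries {c e α : K} {u : K[X]} {L : ℕ}
    (hu : ∀ k, IsIntegral ℤ (c * u.coeff k)) (hL : u.natDegree ≤ L) (he : IsIntegral ℤ e)
    (hα : IsIntegral ℤ (e * α)) :
    PowerSeries.C (c * e ^ L) * (taylor α u : K⟦X⟧) ∈ integralPowerSeries K := by
  have hshift :
      PowerSeries.C e * (Polynomial.X + Polynomial.C α : K[X]) ∈ integralPowerSeries K := by
    rw [Polynomial.coe_add, Polynomial.coe_X, Polynomial.coe_C, mul_add, ← map_mul]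
    exact add_mem (mul_mem (C_mem_integralPowerSeries he) X_mem_integralPowerSeries)
      (C_mem_integralPowerSeries hα)
  rw [u.as_sum_range' (L + 1) (Nat.lt_succ_of_le hL), map_sum,
    ← coeToPowerSeries.ringHom_apply, map_sum, Finset.mul_sum]
  refine sum_mem fun i hi => ?_
  have hiL : i ≤ L := Nat.lt_succ_iff.mp (mem_range.mp hi)
  rw [coeToPowerSeries.ringHom_apply, taylor_monomial, Polynomial.coe_mul, Polynomial.coe_pow,
    Polynomial.coe_C, ← pow_mul_pow_sub e hiL]
  have key : PowerSeries.C (c * (e ^ i * e ^ (L - i))) * (PowerSeries.C (u.coeff i) *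
      ((Polynomial.X + Polynomial.C α : K[X]) : K⟦X⟧) ^ i)
      = PowerSeries.C (c * u.coeff i) * PowerSeries.C e ^ (L - i) *
        (PowerSeries.C e * (Polynomial.X + Polynomial.C α : K[X])) ^ i := by
    simp only [map_mul, map_pow]
    ring
  rw [key]
  exact mul_mem (mul_mem (C_mem_integralPowerSeries (hu i))
    (pow_mem (C_mem_integralPowerSeries he) _)) (pow_mem hshift _)

end IntegralPowerSeries

theorem exists_nat_mul_isIntegral {K : Type*} [Field K] [NumberField K] (s : Finset K) :
    ∃ c : ℕ, 0 < c ∧ ∀ x ∈ s, IsIntegral ℤ (c * x) := by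
  obtain ⟨y, hy, hint⟩ := exists_integral_multiples ℤ ℚ s
  refine ⟨y.natAbs, Int.natAbs_pos.mpr hy, fun x hx => ?_⟩
  have h := hint x hx
  rw [zsmul_eq_mul] at h
  rcases Int.natAbs_eq y with hy' | hy'
  · rwa [hy', Int.cast_natCast] at h
  · rw [hy', Int.cast_neg, Int.cast_natCast, neg_mul] at h
    simpa using h.neg

section TaylorSeries

variable {R : Type*} [CommRing R]

/-- `u ↦ u (α + z)`, as a power series in `z`. -/
def taylorSeries (α : R) : R[X] →+* R⟦X⟧ :=
  coeToPowerSeries.ringHom.comp (taylorAlgHom α : R[X] →+* R[X])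

theorem taylorSeries_apply (α : R) (u : R[X]) : taylorSeries α u = (taylor α u : R⟦X⟧) :=
  rfl

theorem derivative_taylorSeries (α : R) (u : R[X]) :
    d⁄dX R (taylorSeries α u) = taylorSeries α (derivative u) := by
  rw [taylorSeries_apply, taylorSeries_apply, PowerSeries.derivative_coe, taylor_apply,
    taylor_apply, derivative_comp]
  simp

theorem constantCoeff_taylorSeries (α : R) (u : R[X]) :
    constantCoeff (taylorSeries α u) = u.eval α := by
  rw [taylorSeries_apply, Polynomial.constantCoeff_coe, taylor_coeff_zero]

end TaylorSeries

theorem isIntegral_constantCoeff_divXPowOrder_mul {K : Type*} [CommRing K] {F g : K⟦X⟧}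
    (h : F * g ∈ integralPowerSeries K) :
    IsIntegral ℤ (constantCoeff (divXPowOrder F) * constantCoeff g) := by
  have hF : F * g = PowerSeries.X ^ F.order.toNat * (divXPowOrder F * g) := by
    rw [← mul_assoc, X_pow_order_mul_divXPowOrder]
  have := h F.order.toNat
  rwa [hF, PowerSeries.coeff_X_pow_mul', if_pos le_rfl, Nat.sub_self, coeff_zero_eq_constantCoeff,
    map_mul] at this

/-- Read `t * g = u * h` at `α` to the order of vanishing of `t` there. -/
theorem isIntegral_mul_constantCoeff_divXPowOrder_mul_eval {K : Type*} [CommRing K] [IsDomain K]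
    {α a b : K} {t g u h : K[X]} (hprod : t * g = u * h)
    (hu : PowerSeries.C a * taylorSeries α u ∈ integralPowerSeries K)
    (hh : PowerSeries.C b * taylorSeries α h ∈ integralPowerSeries K) :
    IsIntegral ℤ (a * b * (constantCoeff (divXPowOrder (taylorSeries α t)) * g.eval α)) := by
  have hmem : taylorSeries α t * (PowerSeries.C (a * b) * taylorSeries α g)
      = PowerSeries.C a * taylorSeries α u * (PowerSeries.C b * taylorSeries α h) := by
    rw [mul_left_comm, ← map_mul (taylorSeries α), hprod, map_mul, map_mul]
    ring
  have := isIntegral_constantCoeff_divXPowOrder_mul (hmem ▸ mul_mem hu hh)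
  rw [map_mul, PowerSeries.constantCoeff_C, constantCoeff_taylorSeries] at this
  convert this using 1
  ring

theorem coeff_sum_coe_mul_iterate_derivative {R : Type*} [CommRing R] (P : ℕ → R[X])
    (f : R⟦X⟧) (n m : ℕ) :
    PowerSeries.coeff m (∑ k ∈ range (n + 1), (P k : R⟦X⟧) * (d⁄dX R)^[k] f)
      = ∑ k ∈ range (n + 1), ∑ l ∈ range (m + 1),
          (P k).coeff l * ((m - l + 1).ascFactorial k * PowerSeries.coeff (m - l + k) f) := by
  rw [map_sum]
  refine sum_congr rfl fun k _ => ?_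
  rw [PowerSeries.coeff_mul, Nat.sum_antidiagonal_eq_sum_range_succ_mk]
  refine sum_congr rfl fun l _ => ?_
  rw [Polynomial.coeff_coe, PowerSeries.coeff_iterate_derivative]

/-- In the coefficient of `z ^ m` of `∑ P k * f⁽ᵏ⁾`, the term `(k, l) = (n, 0)` is the only one
involving a coefficient of `f` of index `≥ m + n`. -/
theorem sum_sum_eq_sum_sum_ite_add {M : Type*} [AddCommMonoid M] (t : ℕ → ℕ → M) (n m : ℕ) :
    ∑ k ∈ range (n + 1), ∑ l ∈ range (m + 1), t k l
      = (∑ k ∈ range (n + 1), ∑ l ∈ range (m + 1),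
          if m - l + k < m + n then t k l else 0) + t n 0 := by
  rw [sum_range_succ (fun k => ∑ l ∈ range (m + 1), t k l),
    sum_range_succ (fun k => ∑ l ∈ range (m + 1), ite _ _ _), sum_range_succ' (t n),
    sum_range_succ' (fun l => ite _ _ _), if_neg (by omega), add_zero, add_assoc]
  congr 1
  · refine sum_congr rfl fun k hk => sum_congr rfl fun l hl => ?_
    rw [if_pos (by simp only [mem_range] at hk hl; omega)]
  · refine congrArg (· + t n 0) (sum_congr rfl fun l hl => ?_)
    rw [if_pos (by simp only [mem_range] at hl; omega)]

section Solution

variable {K : Type*} [Field K] (P : ℕ → K[X]) (n : ℕ) (c : ℕ → K)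

/-- Coefficients of the solution of `∑ P k * f⁽ᵏ⁾ = 0` with `a j = c j` for `j < n`. The guard
`j - n - l + k < j` drops exactly the leading term `(k, l) = (n, 0)` of the equation, whose
coefficient `(P n).coeff 0 * (j - n + 1) ⋯ j` is the divisor. -/
def solutionCoeff (j : ℕ) : K :=
  if j < n then c j else
    -((P n).coeff 0 * ((j - n + 1).ascFactorial n : K))⁻¹ *
      ∑ k ∈ range (n + 1), ∑ l ∈ range (j - n + 1),
        if _ : j - n - l + k < j then
          (P k).coeff l * ((j - n - l + 1).ascFactorial k : K) * solutionCoeff (j - n - l + k)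
        else 0
termination_by j

theorem solutionCoeff_of_lt {j : ℕ} (hj : j < n) : solutionCoeff P n c j = c j := by
  rw [solutionCoeff, if_pos hj]

variable [CharZero K]

theorem solutionCoeff_add (h0 : (P n).coeff 0 ≠ 0) (m : ℕ) :
    (P n).coeff 0 * ((m + 1).ascFactorial n : K) * solutionCoeff P n c (m + n)
      = -∑ k ∈ range (n + 1), ∑ l ∈ range (m + 1),
          if m - l + k < m + n then
            (P k).coeff l * ((m - l + 1).ascFactorial k : K) * solutionCoeff P n c (m - l + k)
          else 0 := by
  have hasc : ((m + 1).ascFactorial n : K) ≠ 0 :=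
    Nat.cast_ne_zero.mpr (Nat.ascFactorial_pos m n).ne'
  rw [solutionCoeff, if_neg (by omega)]
  simp only [Nat.add_sub_cancel, dite_eq_ite]
  field_simp

theorem sum_coe_mul_iterate_derivative_solution (h0 : (P n).coeff 0 ≠ 0) :
    ∑ k ∈ range (n + 1), (P k : K⟦X⟧) * (d⁄dX K)^[k] (PowerSeries.mk (solutionCoeff P n c))
      = 0 := by
  ext m
  rw [coeff_sum_coe_mul_iterate_derivative, sum_sum_eq_sum_sum_ite_add, map_zero]
  simp only [PowerSeries.coeff_mk, Nat.sub_zero, ← mul_assoc]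
  rw [solutionCoeff_add P n c h0 m, add_neg_cancel]

end Solution

theorem exists_pow_le_factorial_rpow {C ε : ℝ} (hC : 0 ≤ C) (hε : 0 < ε) :
    ∃ N : ℕ, ∀ k ≥ N, C ^ k ≤ (k.factorial : ℝ) ^ ε := by
  obtain ⟨N, hN⟩ := Filter.eventually_atTop.mp
    ((FloorSemiring.tendsto_pow_div_factorial_atTop (C ^ ε⁻¹)).eventually (ge_mem_nhds one_pos))
  refine ⟨N, fun k hk => ?_⟩
  have hle : (C ^ ε⁻¹) ^ k ≤ k.factorial := by
    simpa [div_le_one (by positivity : (0 : ℝ) < k.factorial)] using hN k hk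
  calc C ^ k = ((C ^ ε⁻¹) ^ k) ^ ε := by
        rw [Real.rpow_pow_comm hC, Real.rpow_inv_rpow (by positivity) hε.ne']
    _ ≤ (k.factorial : ℝ) ^ ε := Real.rpow_le_rpow (by positivity) hle hε.le

theorem Nat.ascFactorial_succ_le_ascFactorial_succ {a b k n : ℕ} (hab : a ≤ b) (hkn : k ≤ n) :
    (a + 1).ascFactorial k ≤ (b + 1).ascFactorial n :=
  calc (a + 1).ascFactorial k ≤ (b + 1).ascFactorial k := Nat.ascFactorial_le k (by omega)
    _ ≤ (b + 1).ascFactorial k * (b + k + 1).ascFactorial (n - k) :=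
        Nat.le_mul_of_pos_right _ (Nat.ascFactorial_pos _ _)
    _ = (b + 1).ascFactorial n := by
        rw [show b + k + 1 = b + 1 + k by ring, Nat.ascFactorial_mul_ascFactorial,
          Nat.add_sub_cancel' hkn]

section Size

open NumberField

variable {K : Type*} [Field K] [NumberField K]

theorem sum_range_house_coeff_le (p : K[X]) (N : ℕ) :
    ∑ l ∈ range N, house (p.coeff l) ≤ ∑ l ∈ p.support, house (p.coeff l) := by
  classical
  rw [← sum_filter_of_ne (p := (· ∈ p.support)) fun l _ h =>
    mem_support_iff.mpr fun h0 => h (by simp [h0, house])]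
  exact sum_le_sum_of_subset_of_nonneg (fun l hl => (mem_filter.mp hl).2)
    fun _ _ _ => house_nonneg _

variable (P : ℕ → K[X]) (n : ℕ) (c : ℕ → K)

theorem mul_norm_recursion_term_le (σ : K →+* ℂ) {m k l : ℕ} {C : ℝ} (hC : 1 ≤ C) (hk : k ≤ n)
    (ih : ∀ j < m + n, ‖σ (solutionCoeff P n c j)‖ ≤ C ^ j) :
    C * ‖σ (if m - l + k < m + n then
        (P k).coeff l * ((m - l + 1).ascFactorial k : K) * solutionCoeff P n c (m - l + k)
      else 0)‖ ≤ house ((P k).coeff l) * ((m + 1).ascFactorial n * C ^ (m + n)) := by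
  split_ifs with hlt
  · rw [map_mul, map_mul, map_natCast, norm_mul, norm_mul, Complex.norm_natCast]
    have hasc : ((m - l + 1).ascFactorial k : ℝ) ≤ (m + 1).ascFactorial n := by
      exact_mod_cast Nat.ascFactorial_succ_le_ascFactorial_succ (Nat.sub_le m l) hk
    have hrec : C * ‖σ (solutionCoeff P n c (m - l + k))‖ ≤ C ^ (m + n) :=
      calc C * ‖σ (solutionCoeff P n c (m - l + k))‖ ≤ C * C ^ (m - l + k) :=
            mul_le_mul_of_nonneg_left (ih _ hlt) (by positivity)
        _ = C ^ (m - l + k + 1) := (pow_succ' _ _).symm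
        _ ≤ C ^ (m + n) := pow_le_pow_right₀ hC hlt
    calc C * (‖σ ((P k).coeff l)‖ * ((m - l + 1).ascFactorial k : ℝ)
          * ‖σ (solutionCoeff P n c (m - l + k))‖)
        = ‖σ ((P k).coeff l)‖ * ((m - l + 1).ascFactorial k : ℝ)
          * (C * ‖σ (solutionCoeff P n c (m - l + k))‖) := by ring
      _ ≤ house ((P k).coeff l) * (m + 1).ascFactorial n * C ^ (m + n) :=
          mul_le_mul (mul_le_mul (norm_embedding_le_house _ σ) hasc (by positivity)
            (house_nonneg _)) hrec (by positivity) (mul_nonneg (house_nonneg _) (by positivity))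
      _ = _ := by ring
  · rw [map_zero, norm_zero, mul_zero]
    exact mul_nonneg (house_nonneg _) (by positivity)

theorem mul_norm_solutionCoeff_add_le (h0 : (P n).coeff 0 ≠ 0) (σ : K →+* ℂ) {m : ℕ} {C : ℝ}
    (hC : 1 ≤ C) (ih : ∀ j < m + n, ‖σ (solutionCoeff P n c j)‖ ≤ C ^ j) :
    C * (‖σ ((P n).coeff 0)‖ * (m + 1).ascFactorial n * ‖σ (solutionCoeff P n c (m + n))‖)
      ≤ (∑ k ∈ range (n + 1), ∑ l ∈ (P k).support, house ((P k).coeff l))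
        * ((m + 1).ascFactorial n * C ^ (m + n)) := by
  have h := congrArg (fun x => C * ‖σ x‖) (solutionCoeff_add P n c h0 m)
  simp only [map_mul, map_natCast, norm_mul, Complex.norm_natCast, map_neg, norm_neg] at h
  have hnorm : ∀ (s : Finset ℕ) (g : ℕ → K), ‖σ (∑ x ∈ s, g x)‖ ≤ ∑ x ∈ s, ‖σ (g x)‖ :=
    fun s g => by rw [map_sum]; exact norm_sum_le _ _
  rw [h, sum_mul]
  refine (mul_le_mul_of_nonneg_left (hnorm _ _) (by positivity)).trans ?_
  rw [mul_sum]
  refine sum_le_sum fun k hk => ?_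
  refine (mul_le_mul_of_nonneg_left (hnorm _ _) (by positivity)).trans ?_
  rw [mul_sum]
  refine (sum_le_sum fun l _ => mul_norm_recursion_term_le P n c σ hC
    (Nat.lt_succ_iff.mp (mem_range.mp hk)) ih).trans ?_
  rw [← sum_mul]
  exact mul_le_mul_of_nonneg_right (sum_range_house_coeff_le _ _) (by positivity)

theorem exists_norm_solutionCoeff_le (h0 : (P n).coeff 0 ≠ 0)
    (hc : ∀ σ : K →+* ℂ, ∀ j < n, ‖σ (c j)‖ ≤ 1) :
    ∃ C : ℝ, 1 ≤ C ∧ ∀ (σ : K →+* ℂ) (j : ℕ), ‖σ (solutionCoeff P n c j)‖ ≤ C ^ j := by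
  set B := ∑ k ∈ range (n + 1), ∑ l ∈ (P k).support, house ((P k).coeff l)
  set C := max 1 (house ((P n).coeff 0)⁻¹ * B)
  have hC : 1 ≤ C := le_max_left _ _
  have hB : 0 ≤ B := sum_nonneg fun k _ => sum_nonneg fun l _ => house_nonneg _
  refine ⟨C, hC, fun σ j => ?_⟩
  induction j using Nat.strong_induction_on with
  | _ j ih =>
  rcases lt_or_ge j n with hj | hj
  · rw [solutionCoeff_of_lt P n c hj]
    exact (hc σ j hj).trans (one_le_pow₀ hC)
  obtain ⟨m, rfl⟩ : ∃ m, j = m + n := ⟨j - n, by omega⟩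
  set A : ℝ := (((m + 1).ascFactorial n : ℕ) : ℝ)
  have hinv : ‖σ ((P n).coeff 0)⁻¹‖ * ‖σ ((P n).coeff 0)‖ = 1 := by
    rw [← norm_mul, ← map_mul, inv_mul_cancel₀ h0, map_one, norm_one]
  have hβ : ‖σ ((P n).coeff 0)⁻¹‖ * B ≤ C :=
    (mul_le_mul_of_nonneg_right (norm_embedding_le_house _ σ) hB).trans (le_max_right _ _)
  refine le_of_mul_le_mul_left ?_ (by positivity : 0 < C * A)
  calc C * A * ‖σ (solutionCoeff P n c (m + n))‖
      = ‖σ ((P n).coeff 0)⁻¹‖ * (C * (‖σ ((P n).coeff 0)‖ * A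
          * ‖σ (solutionCoeff P n c (m + n))‖)) := by
        linear_combination (-(C * A * ‖σ (solutionCoeff P n c (m + n))‖)) * hinv
    _ ≤ ‖σ ((P n).coeff 0)⁻¹‖ * (B * (A * C ^ (m + n))) :=
        mul_le_mul_of_nonneg_left (mul_norm_solutionCoeff_add_le P n c h0 σ hC ih) (norm_nonneg _)
    _ ≤ C * (A * C ^ (m + n)) := by
        rw [← mul_assoc]
        exact mul_le_mul_of_nonneg_right hβ (by positivity)
    _ = C * A * C ^ (m + n) := by ring

theorem exists_norm_solutionCoeff_le_factorial_rpow (h0 : (P n).coeff 0 ≠ 0)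
    (hc : ∀ σ : K →+* ℂ, ∀ j < n, ‖σ (c j)‖ ≤ 1) (ε : ℝ) (hε : 0 < ε) :
    ∃ N : ℕ, ∀ k ≥ N, ∀ σ : K →+* ℂ, ‖σ (solutionCoeff P n c k)‖ ≤ (k.factorial : ℝ) ^ ε := by
  obtain ⟨C, hC, hbound⟩ := exists_norm_solutionCoeff_le P n c h0 hc
  obtain ⟨N, hN⟩ := exists_pow_le_factorial_rpow (zero_le_one.trans hC) hε
  exact ⟨N, fun k hk σ => (hbound σ k).trans (hN k hk)⟩

end Size

section Denominators

variable {K : Type*} [Field K] (p : ℕ → K[X]) (n : ℕ) (α : K)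

theorem eval_pow_mul_factorial_mul_coeff (hn : 0 < n) {f : K⟦X⟧}
    (hf : ∑ k ∈ range (n + 1), taylorSeries α (p k) * (d⁄dX K)^[k] f = 0) (m : ℕ) :
    (p n).eval α ^ m * (m.factorial * PowerSeries.coeff m f)
      = ∑ j : Fin n, (iterDerivMatrix derivative' (p n) (scaledCompanion p n) m ⟨0, hn⟩ j).eval α
          * ((j : ℕ).factorial * PowerSeries.coeff j f) := by
  have hsys := smul_derivative_eq_scaledCompanion_mulVec (d⁄dX K) hf
  rw [show (fun k => taylorSeries α (p k)) = taylorSeries α ∘ p from rfl, ← scaledCompanion_map]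
    at hsys
  have key := congrFun (pow_smul_iterate_eq_iterDerivMatrix_mulVec _ _ _ hsys m) ⟨0, hn⟩
  rw [← map_iterDerivMatrix derivative' _ _ (d⁄dX K) _ fun u => (derivative_taylorSeries α u).symm]
    at key
  have := congrArg PowerSeries.constantCoeff key
  simpa [Matrix.mulVec, dotProduct, constantCoeff_taylorSeries,
    constantCoeff_iterate_derivative] using this

variable [NumberField K]

theorem exists_isIntegral_pow_mul_eval_iterDerivMatrix {T : K[X]} (hT : T ≠ 0)
    {H : ℕ → Matrix (Fin n) (Fin n) K[X]}
    (hsup : ∀ i j : Fin n, (j : ℕ) = i + 1 → H 1 i j = T)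
    (hlastrow : ∀ i j : Fin n, (i : ℕ) = n - 1 → p n * H 1 i j = -(T * p j))
    (hzero : ∀ i j : Fin n, (i : ℕ) ≠ n - 1 → (j : ℕ) ≠ i + 1 → H 1 i j = 0)
    (hH : ∀ s, 1 ≤ s → H (s + 1)
      = H s * H 1 + T • (H s).map derivative - ((s : K[X]) * derivative T) • H s) :
    ∃ A : ℕ, 0 < A ∧ ∀ m ≥ 1, ∀ q : K,
      (∀ i j k, IsIntegral ℤ (q / m.factorial * (H m i j).coeff k)) → ∀ i j,
        IsIntegral ℤ (q / m.factorial * A ^ m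
          * (iterDerivMatrix derivative' (p n) (scaledCompanion p n) m i j).eval α) := by
  classical
  set w := constantCoeff (divXPowOrder (taylorSeries α T))
  have hw : w ≠ 0 := by
    refine constantCoeff_divXPowOrder_eq_zero_iff.not.mpr ?_
    rwa [taylorSeries_apply, Polynomial.coe_eq_zero_iff, taylor_eq_zero]
  obtain ⟨D, hdeg⟩ := exists_natDegree_le_mul hH
  obtain ⟨e, he0, he⟩ :=
    exists_nat_mul_isIntegral (insert α (insert w⁻¹ (taylor α (p n)).coeffs))
  have hpn : PowerSeries.C (e : K) * taylorSeries α (p n) ∈ integralPowerSeries K := by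
    refine taylorSeries_apply α (p n) ▸
      C_mul_coe_mem_integralPowerSeries_iff.mpr fun k => ?_
    by_cases hk : (taylor α (p n)).coeff k = 0
    · rw [hk, mul_zero]
      exact isIntegral_zero
    · exact he _ (by simp [coeff_mem_coeffs hk])
  refine ⟨e ^ (D + 2), by positivity, fun m hm q hq i j => ?_⟩
  have hprod := congrFun (congrFun (pow_smul_iterDerivMatrix_scaledCompanion derivative'
    hsup hlastrow hzero hH hm) i) j
  simp only [Matrix.smul_apply, smul_eq_mul] at hprod
  have hGij := isIntegral_mul_constantCoeff_divXPowOrder_mul_eval (a := (e : K) ^ m) hprod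
    (by rw [map_pow, map_pow, ← mul_pow]; exact pow_mem hpn m)
    (C_mul_coe_taylor_mem_integralPowerSeries (hq i j) (hdeg m hm _ _)
      (isIntegral_natCast e) (he α (by simp)))
  rw [map_pow, divXPowOrder_pow, map_pow] at hGij
  change IsIntegral ℤ (_ * (w ^ m * _)) at hGij
  have heq : q / m.factorial * ((e ^ (D + 2) : ℕ) : K) ^ m
        * (iterDerivMatrix derivative' (p n) (scaledCompanion p n) m i j).eval α
      = ((e : K) * w⁻¹) ^ m * ((e : K) ^ m * (q / m.factorial * (e : K) ^ (m * D))
        * (w ^ m * (iterDerivMatrix derivative' (p n) (scaledCompanion p n) m i j).eval α)) := by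
    rw [mul_pow, inv_pow]
    push_cast
    field_simp
    ring
  rw [heq]
  exact ((he w⁻¹ (by simp)).pow m).mul hGij

theorem exists_isIntegral_pow_mul_coeff (hn : 0 < n) (hα : (p n).eval α ≠ 0)
    {T : K[X]} (hT : T ≠ 0) {H : ℕ → Matrix (Fin n) (Fin n) K[X]}
    (hsup : ∀ i j : Fin n, (j : ℕ) = i + 1 → H 1 i j = T)
    (hlastrow : ∀ i j : Fin n, (i : ℕ) = n - 1 → p n * H 1 i j = -(T * p j))
    (hzero : ∀ i j : Fin n, (i : ℕ) ≠ n - 1 → (j : ℕ) ≠ i + 1 → H 1 i j = 0)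
    (hH : ∀ s, 1 ≤ s → H (s + 1)
      = H s * H 1 + T • (H s).map derivative - ((s : K[X]) * derivative T) • H s)
    {f : K⟦X⟧} (hf : ∑ k ∈ range (n + 1), taylorSeries α (p k) * (d⁄dX K)^[k] f = 0)
    (hf₀ : ∀ j < n, IsIntegral ℤ (PowerSeries.coeff j f)) :
    ∃ A : ℕ, 0 < A ∧ ∀ m ≥ 1, ∀ q : K,
      (∀ i j k, IsIntegral ℤ (q / m.factorial * (H m i j).coeff k)) →
        IsIntegral ℤ (q * A ^ m * PowerSeries.coeff m f) := by
  obtain ⟨A, hA, hG⟩ :=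
    exists_isIntegral_pow_mul_eval_iterDerivMatrix p n α hT hsup hlastrow hzero hH
  obtain ⟨e, he0, he⟩ := exists_nat_mul_isIntegral {((p n).eval α)⁻¹}
  refine ⟨e * A, by positivity, fun m hm q hq => ?_⟩
  have hfac : (m.factorial : K) ≠ 0 := Nat.cast_ne_zero.mpr (Nat.factorial_ne_zero m)
  have hexpand : q * ((e * A : ℕ) : K) ^ m * PowerSeries.coeff m f
      = ((e : K) * ((p n).eval α)⁻¹) ^ m * ∑ j : Fin n, q / m.factorial * (A : K) ^ m
          * (iterDerivMatrix derivative' (p n) (scaledCompanion p n) m ⟨0, hn⟩ j).eval α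
          * ((j : ℕ).factorial * PowerSeries.coeff j f) :=
    calc q * ((e * A : ℕ) : K) ^ m * PowerSeries.coeff m f
        = ((e : K) * ((p n).eval α)⁻¹) ^ m * (q / m.factorial * (A : K) ^ m
          * ((p n).eval α ^ m * (m.factorial * PowerSeries.coeff m f))) := by
          rw [mul_pow, inv_pow]
          push_cast
          field_simp
          ring
      _ = _ := by
          rw [eval_pow_mul_factorial_mul_coeff p n α hn hf m, mul_sum]
          exact congrArg _ (sum_congr rfl fun j _ => by ring)
  rw [hexpand]
  exact ((he _ (mem_singleton_self _)).pow m).mul (IsIntegral.sum _ fun j _ =>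
    (hG m hm q hq _ j).mul ((isIntegral_natCast _).mul (hf₀ j j.isLt)))

end Denominators

/-- A geometric loss `A ^ m` on top of the Galochkin denominators is still `(k !) ^ o(1)`. -/
theorem exists_den_le_factorial_rpow {K ι : Type*} [Field K] {H : ℕ → Matrix ι ι K[X]} {a : ℕ → K}
    (hGal : ∀ ε : ℝ, 0 < ε → ∃ s₀ : ℕ, ∀ s ≥ s₀, ∃ q : ℕ, 0 < q ∧
      (q : ℝ) ≤ (s.factorial : ℝ) ^ ε ∧
      ∀ m, 1 ≤ m → m ≤ s → ∀ i j k,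
        IsIntegral ℤ (((q : K) / (m.factorial : K)) * (H m i j).coeff k))
    {A : ℕ} (hA : 0 < A) (ha : ∀ m ≥ 1, ∀ q : K,
      (∀ i j k, IsIntegral ℤ (q / m.factorial * (H m i j).coeff k)) →
        IsIntegral ℤ (q * A ^ m * a m))
    (ha₀ : IsIntegral ℤ (a 0)) (ε : ℝ) (hε : 0 < ε) :
    ∃ N : ℕ, ∀ k ≥ N, ∃ d : ℕ, 0 < d ∧ (d : ℝ) ≤ (k.factorial : ℝ) ^ ε ∧
      ∀ j ≤ k, IsIntegral ℤ ((d : K) * a j) := by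
  obtain ⟨s₀, hs₀⟩ := hGal (ε / 2) (by linarith)
  obtain ⟨N, hN⟩ := exists_pow_le_factorial_rpow (Nat.cast_nonneg A) (half_pos hε)
  refine ⟨max s₀ N, fun k hk => ?_⟩
  obtain ⟨q, hq, hqle, hqint⟩ := hs₀ k (le_of_max_le_left hk)
  refine ⟨q * A ^ k, by positivity, ?_, fun j hj => ?_⟩
  · calc ((q * A ^ k : ℕ) : ℝ) = q * (A : ℝ) ^ k := by push_cast; ring
      _ ≤ (k.factorial : ℝ) ^ (ε / 2) * (k.factorial : ℝ) ^ (ε / 2) :=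
          mul_le_mul hqle (hN k (le_of_max_le_right hk)) (by positivity) (by positivity)
      _ = (k.factorial : ℝ) ^ ε := by
          rw [← Real.rpow_add (by exact_mod_cast Nat.factorial_pos k), add_halves]
  rcases Nat.eq_zero_or_pos j with rfl | hj₀
  · exact (isIntegral_natCast _).mul ha₀
  have hkj : ((q * A ^ k : ℕ) : K) * a j = (A ^ (k - j) : ℕ) * ((q : K) * (A : K) ^ j * a j) := by
    push_cast
    rw [← pow_mul_pow_sub (A : K) hj]
    ring
  rw [hkj]
  exact (isIntegral_natCast _).mul (ha j hj₀ q (hqint j hj₀ hj))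

theorem linearIndependent_of_coeff_eq_ite {K : Type*} [Field K] {n : ℕ} {f : Fin n → K⟦X⟧}
    (hf : ∀ i : Fin n, ∀ j : Fin n, PowerSeries.coeff j (f i) = if (j : ℕ) = i then 1 else 0) :
    LinearIndependent K f := by
  have h : (LinearMap.pi fun j : Fin n => PowerSeries.coeff (R := K) j) ∘ f
      = Pi.basisFun K (Fin n) := by
    ext i j
    simp [hf, Pi.single_apply, Fin.ext_iff]
  exact LinearIndependent.of_comp _ (h ▸ (Pi.basisFun K (Fin n)).linearIndependent)

theorem GOperatorLarge_basis_of_solutions_at_ordinary_point_general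
    (K : Subfield ℂ) [FiniteDimensional ℚ K]
    (n : ℕ) (p : ℕ → Polynomial K)
    (T : Polynomial K) (hT : T ≠ 0)
    (H : ℕ → Matrix (Fin n) (Fin n) (Polynomial K))
    -- H 1 = T · (companion matrix of L = ∑ p_k (d/dz)^k) :
    (hsup : ∀ i j : Fin n, (j : ℕ) = (i : ℕ) + 1 → H 1 i j = T)
    (hlastrow : ∀ i j : Fin n, (i : ℕ) = n - 1 →
        p n * H 1 i j = -(T * p (j : ℕ)))
    (hzero : ∀ i j : Fin n, (i : ℕ) ≠ n - 1 → (j : ℕ) ≠ (i : ℕ) + 1 → H 1 i j = 0)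
    (hHrec : ∀ s, 1 ≤ s → H (s + 1)
        = H s * H 1 + T • (H s).map Polynomial.derivative
          - ((s : Polynomial K) * Polynomial.derivative T) • H s)
    -- Galochkin condition in the large sense :
    (hGal : ∀ ε : ℝ, 0 < ε → ∃ s₀ : ℕ, ∀ s ≥ s₀, ∃ q : ℕ, 0 < q ∧
        (q : ℝ) ≤ (s.factorial : ℝ) ^ ε ∧
        ∀ m, 1 ≤ m → m ≤ s → ∀ i j k, IsIntegral ℤ
          (((q : K) / (m.factorial : K)) * ((H m i j).coeff k)))
    -- α is an ordinary point of L :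
    (α : K) (hα : (p n).eval α ≠ 0) :
    ∃ f : Fin n → PowerSeries K, LinearIndependent K f ∧
      ∀ i, IsGFunctionLarge K (f i) ∧
        ∑ k ∈ Finset.range (n + 1),
          (((p k).comp (Polynomial.X + Polynomial.C α) : Polynomial K) : PowerSeries K)
            * (PowerSeries.derivativeFun^[k] (f i)) = 0 := by
  have : NumberField K := ⟨⟩
  set P := fun k => taylor α (p k)
  have h0 : (P n).coeff 0 ≠ 0 := by rwa [taylor_coeff_zero]
  set c : Fin n → ℕ → K := fun i j => if j = i then 1 else 0
  have hode : ∀ i, ∑ k ∈ range (n + 1), (P k : K⟦X⟧) * (d⁄dX K)^[k]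
      (PowerSeries.mk (solutionCoeff P n (c i))) = 0 :=
    fun i => sum_coe_mul_iterate_derivative_solution P n (c i) h0
  refine ⟨fun i => PowerSeries.mk (solutionCoeff P n (c i)), linearIndependent_of_coeff_eq_ite
    fun i j => by rw [PowerSeries.coeff_mk, solutionCoeff_of_lt P n _ j.isLt], fun i => ?_⟩
  refine ⟨⟨⟨n, P, ⟨n, le_rfl, fun h => h0 (by rw [h, coeff_zero])⟩, hode i⟩, fun ε hε => ?_,
    fun ε hε => ?_⟩, hode i⟩
  · simpa only [PowerSeries.coeff_mk] using exists_norm_solutionCoeff_le_factorial_rpow P n (c i)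
      h0 (fun σ j _ => by by_cases h : j = i <;> simp [c, h]) ε hε
  · have hc : ∀ j < n,
        IsIntegral ℤ (PowerSeries.coeff j (PowerSeries.mk (solutionCoeff P n (c i)))) := by
      intro j hj
      rw [PowerSeries.coeff_mk, solutionCoeff_of_lt P n _ hj]
      by_cases h : j = i <;> simp [c, h, isIntegral_one, isIntegral_zero]
    obtain ⟨A, hA, ha⟩ := exists_isIntegral_pow_mul_coeff p n α i.pos hα hT hsup hlastrow hzero
      hHrec (hode i) hc
    simpa only [PowerSeries.coeff_mk] using
      exists_den_le_factorial_rpow hGal hA ha (hc 0 i.pos) ε hε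

/-- Proposition 9: at an ordinary point `α`, a G-operator in the large sense
has a full basis of solutions which are G-functions in the large sense. -/
theorem GOperatorLarge_basis_of_solutions_at_ordinary_point
    (K : Subfield ℂ) [FiniteDimensional ℚ K]
    (n : ℕ) (hn : 1 ≤ n) (p : ℕ → Polynomial K) (hpn : p n ≠ 0)
    (T : Polynomial K) (hT : T ≠ 0) (hTint : ∀ k, IsIntegral ℤ (T.coeff k))
    (H : ℕ → Matrix (Fin n) (Fin n) (Polynomial K))
    -- H 1 = T · (companion matrix of L = ∑ p_k (d/dz)^k) :
    (hsup : ∀ i j : Fin n, (j : ℕ) = (i : ℕ) + 1 → H 1 i j = T)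
    (hlastrow : ∀ i j : Fin n, (i : ℕ) = n - 1 →
        p n * H 1 i j = -(T * p (j : ℕ)))
    (hzero : ∀ i j : Fin n, (i : ℕ) ≠ n - 1 → (j : ℕ) ≠ (i : ℕ) + 1 → H 1 i j = 0)
    (hH1int : ∀ i j k, IsIntegral ℤ ((H 1 i j).coeff k))
    (hHrec : ∀ s, 1 ≤ s → H (s + 1)
        = H s * H 1 + T • (H s).map Polynomial.derivative
          - ((s : Polynomial K) * Polynomial.derivative T) • H s)
    -- Galochkin condition in the large sense :
    (hGal : ∀ ε : ℝ, 0 < ε → ∃ s₀ : ℕ, ∀ s ≥ s₀, ∃ q : ℕ, 0 < q ∧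
        (q : ℝ) ≤ (s.factorial : ℝ) ^ ε ∧
        ∀ m, 1 ≤ m → m ≤ s → ∀ i j k, IsIntegral ℤ
          (((q : K) / (m.factorial : K)) * ((H m i j).coeff k)))
    -- α is an ordinary point of L :
    (α : K) (hα : (p n).eval α ≠ 0) :
    ∃ f : Fin n → PowerSeries K, LinearIndependent K f ∧
      ∀ i, IsGFunctionLarge K (f i) ∧
        ∑ k ∈ Finset.range (n + 1),
          (((p k).comp (Polynomial.X + Polynomial.C α) : Polynomial K) : PowerSeries K)
            * (PowerSeries.derivativeFun^[k] (f i)) = 0 :=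
  GOperatorLarge_basis_of_solutions_at_ordinary_point_general K n p T hT H hsup hlastrow hzero hHrec
    hGal α hα
end
end
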